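/- arXiv:1905.03579 — 6 statements merged into one kernel-verified Lean document; each statement's English description precedes it below -/
import Mathlib

section
/- Let x₁,…,xₙ ∈ {1,…,N} be distinct points with 1 < n ≤ N − p, and let 𝔄 = {A ⊆ {1,…,N} : ∃ i, xᵢ ∈ A} be the increasing event generated by these simple points. Then P(φ ∈ 𝔄∘𝔄) ≤ P(φ ∈ 𝔄)², where 𝔄∘𝔄 = {K ⊆ {1,…,N} : K contains at least two of the points x₁,…,xₙ}. -/
open Matrix

/-- Squared determinant of the submatrix of `Z` formed by the columns indexed by `S`,
when `S` has exactly `q` elements; `0` otherwise. -/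
noncomputable def detSq {q N : ℕ} (Z : Matrix (Fin q) (Fin N) ℝ) (S : Finset (Fin N)) : ℝ :=
  if h : S.card = q then
    (Matrix.det (Matrix.of fun i j : Fin q => Z i ((S.orderIsoOfFin h j : Fin N)))) ^ 2
  else 0

open scoped Classical in
/-- `prDP Z E` is the probability that the determinantal process associated to the
matrix `Z` (with orthonormal rows) belongs to the family `E` of subsets of `{1,…,N}`:
`P(φ(Z) ∈ E) = Σ_{|S| = q, S ∈ E} det(Z_S)²`. -/
noncomputable def prDP {q N : ℕ} (Z : Matrix (Fin q) (Fin N) ℝ)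
    (E : Set (Finset (Fin N))) : ℝ :=
  ∑ S : Finset (Fin N), if S ∈ E then detSq Z S else 0

section BKAux

namespace BK
open Matrix Finset Polynomial



theorem sum_detSq {p N : ℕ} (W : Matrix (Fin p) (Fin N) ℝ) :
    ∑ S : Finset (Fin N), detSq W S = Matrix.det (W * Wᵀ) := by
  classical
  set g : (Fin p → Fin N) → ℝ :=
    fun f => (∏ i, W i (f i)) * Matrix.det (Matrix.of fun i k => W k (f i)) with hg
  have h1 : Matrix.det (W * Wᵀ) = ∑ f : Fin p → Fin N, g f := by
    have hWW : (W * Wᵀ) = Matrix.of (fun i => ∑ j : Fin N, W i j • fun k => W k j) := by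
      ext i k
      simp [Matrix.mul_apply, Finset.sum_apply]
    rw [hWW]
    calc Matrix.det (Matrix.of fun i => ∑ j : Fin N, W i j • fun k => W k j)
        = Matrix.detRowAlternating (fun i => ∑ j : Fin N, W i j • fun k : Fin p => W k j) := rfl
      _ = ∑ f : Fin p → Fin N,
            Matrix.detRowAlternating (fun i => W i (f i) • fun k : Fin p => W k (f i)) :=
          (Matrix.detRowAlternating (R := ℝ) (n := Fin p)).toMultilinearMap.map_sum
            (fun i j => W i j • fun k => W k j)
      _ = ∑ f : Fin p → Fin N, g f := by
          refine Finset.sum_congr rfl fun f _ => ?_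
          have := (Matrix.detRowAlternating (R := ℝ) (n := Fin p)).toMultilinearMap.map_smul_univ
            (fun i' => W i' (f i')) (fun i' => fun k : Fin p => W k (f i'))
          exact this.trans (by rw [smul_eq_mul]; rfl)
  -- non-injective f contribute 0
  have h2 : ∀ f : Fin p → Fin N, ¬ Function.Injective f → g f = 0 := by
    intro f hf
    rw [Function.not_injective_iff] at hf
    obtain ⟨i, j, hij, hne⟩ := hf
    have : Matrix.det (Matrix.of fun i k => W k (f i)) = 0 :=
      Matrix.det_zero_of_row_eq hne (by funext k; simp [hij])
    simp [hg, this]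
  -- sum over permutations for a fixed S
  have h4 : ∀ (S : Finset (Fin N)) (h : S.card = p),
      ∑ σ : Equiv.Perm (Fin p), g (fun i => S.orderEmbOfFin h (σ i)) = detSq W S := by
    intro S h
    have key : ∀ σ : Equiv.Perm (Fin p),
        Matrix.det (Matrix.of fun i k => W k (S.orderEmbOfFin h (σ i)))
          = (Equiv.Perm.sign σ : ℝ) * Matrix.det (Matrix.of fun i j => W i (S.orderEmbOfFin h j)) := by
      intro σ
      have := Matrix.det_permute σ (Matrix.of fun i k => W k (S.orderEmbOfFin h i))
      have e : (Matrix.of fun i k => W k (S.orderEmbOfFin h (σ i)))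
          = (Matrix.of fun i k => W k (S.orderEmbOfFin h i)).submatrix σ id := rfl
      rw [e, this]
      rw [← Matrix.det_transpose (Matrix.of fun i k => W k (S.orderEmbOfFin h i))]
      congr 1
    calc ∑ σ : Equiv.Perm (Fin p), g (fun i => S.orderEmbOfFin h (σ i))
        = (∑ σ : Equiv.Perm (Fin p), (Equiv.Perm.sign σ : ℝ) * ∏ i, W i (S.orderEmbOfFin h (σ i)))
            * Matrix.det (Matrix.of fun i j => W i (S.orderEmbOfFin h j)) := by
          rw [Finset.sum_mul]
          refine Finset.sum_congr rfl fun σ _ => ?_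
          rw [hg]; dsimp only; rw [key σ]; ring
      _ = detSq W S := by
          have : (∑ σ : Equiv.Perm (Fin p), (Equiv.Perm.sign σ : ℝ) * ∏ i, W i (S.orderEmbOfFin h (σ i)))
              = Matrix.det ((Matrix.of fun i j => W i (S.orderEmbOfFin h j))ᵀ) := by
            rw [Matrix.det_apply']
            refine Finset.sum_congr rfl fun σ _ => ?_
            congr 1
          rw [this, Matrix.det_transpose, detSq, dif_pos h]
          rw [show (Matrix.of fun i j : Fin p => W i ((S.orderIsoOfFin h j : Fin N)))
              = (Matrix.of fun i j : Fin p => W i (S.orderEmbOfFin h j)) from rfl]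
          ring
  -- reindex injective functions by (S, σ)
  have h3 : ∑ f : Fin p → Fin N, g f = ∑ S : Finset (Fin N), detSq W S := by
    have hsplit := Finset.sum_filter_add_sum_filter_not Finset.univ
      (fun f : Fin p → Fin N => Function.Injective f) g
    have hz : ∑ f ∈ Finset.univ.filter (fun f : Fin p → Fin N => ¬ Function.Injective f), g f = 0 :=
      Finset.sum_eq_zero fun f hf => h2 f (Finset.mem_filter.mp hf).2
    have hz' : ∑ f ∈ Finset.univ.filter (fun f : Fin p → Fin N => Function.Injective f), g f
        = ∑ f : Fin p → Fin N, g f := by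
      rw [← hsplit]
      rw [Finset.filter_not] at hz
      rw [Finset.filter_not, hz, add_zero]
    rw [← hz']
    -- now the bijection
    have hRHS : ∑ S : Finset (Fin N), detSq W S
        = ∑ x : (Σ _S : {S : Finset (Fin N) // S.card = p}, Equiv.Perm (Fin p)),
            g (fun i => x.1.1.orderEmbOfFin x.1.2 (x.2 i)) := by
      rw [← Finset.univ_sigma_univ, Finset.sum_sigma]
      have hsub : ∑ S : Finset (Fin N), detSq W S = ∑ S : {S : Finset (Fin N) // S.card = p}, detSq W S.1 := by
        rw [← Fintype.sum_subtype_add_sum_subtype (fun S : Finset (Fin N) => S.card = p) (detSq W)]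
        have hzz : ∑ S : {S : Finset (Fin N) // ¬ S.card = p}, detSq W S.1 = 0 := by
          refine Finset.sum_eq_zero fun S _ => ?_
          rw [detSq, dif_neg S.2]
        rw [hzz, add_zero]
      rw [hsub]
      exact Finset.sum_congr rfl fun S _ => (h4 S.1 S.2).symm
    rw [hRHS]
    refine (Finset.sum_bij (fun x _ => fun i => x.1.1.orderEmbOfFin x.1.2 (x.2 i)) ?_ ?_ ?_ ?_).symm
    · intro x _
      refine Finset.mem_filter.mpr ⟨Finset.mem_univ _, ?_⟩
      exact (x.1.1.orderEmbOfFin x.1.2).injective.comp x.2.injective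
    · rintro ⟨⟨S₁, hS₁⟩, σ₁⟩ _ ⟨⟨S₂, hS₂⟩, σ₂⟩ _ hfe
      simp only at hfe
      have r1 : Set.range (fun i => S₁.orderEmbOfFin hS₁ (σ₁ i)) = ↑S₁ := by
        have := σ₁.surjective.range_comp (S₁.orderEmbOfFin hS₁)
        rw [show (fun i => S₁.orderEmbOfFin hS₁ (σ₁ i)) = (S₁.orderEmbOfFin hS₁) ∘ σ₁ from rfl,
          this, Finset.range_orderEmbOfFin]
      have r2 : Set.range (fun i => S₂.orderEmbOfFin hS₂ (σ₂ i)) = ↑S₂ := by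
        have := σ₂.surjective.range_comp (S₂.orderEmbOfFin hS₂)
        rw [show (fun i => S₂.orderEmbOfFin hS₂ (σ₂ i)) = (S₂.orderEmbOfFin hS₂) ∘ σ₂ from rfl,
          this, Finset.range_orderEmbOfFin]
      have hrange : S₁ = S₂ := Finset.coe_injective (by rw [← r1, ← r2, hfe])
      subst hrange
      have hσ : σ₁ = σ₂ := by
        ext i
        exact congrArg Fin.val ((S₁.orderEmbOfFin hS₁).injective (congrFun hfe i))
      subst hσ
      rfl
    · intro f hf
      have hfi : Function.Injective f := (Finset.mem_filter.mp hf).2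
      have hS : (Finset.image f Finset.univ).card = p := by
        rw [Finset.card_image_of_injective _ hfi, Finset.card_univ, Fintype.card_fin]
      set S : Finset (Fin N) := Finset.image f Finset.univ with hSdef
      have hmem : ∀ i, f i ∈ S := fun i => Finset.mem_image_of_mem f (Finset.mem_univ i)
      set k : Fin p → Fin p := fun i => (S.orderIsoOfFin hS).symm ⟨f i, hmem i⟩ with hk
      have hkinj : Function.Injective k := by
        intro a b hab
        have h2 : (⟨f a, hmem a⟩ : {y // y ∈ S}) = ⟨f b, hmem b⟩ :=
          (S.orderIsoOfFin hS).symm.injective (by rw [hk] at hab; exact hab)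
        exact hfi (congrArg Subtype.val h2)
      have hkbij := Finite.injective_iff_bijective.mp hkinj
      refine ⟨⟨⟨S, hS⟩, Equiv.ofBijective k hkbij⟩, Finset.mem_univ _, ?_⟩
      funext i
      show S.orderEmbOfFin hS (k i) = f i
      have : (S.orderIsoOfFin hS) ((S.orderIsoOfFin hS).symm ⟨f i, hmem i⟩) = ⟨f i, hmem i⟩ :=
        (S.orderIsoOfFin hS).apply_symm_apply _
      calc S.orderEmbOfFin hS (k i) = ((S.orderIsoOfFin hS) (k i) : Fin N) := rfl
        _ = f i := by rw [hk]; exact congrArg Subtype.val this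
    · intro x _
      rfl
  rw [h1, h3]



theorem detSq_scale {p N : ℕ} (Z : Matrix (Fin p) (Fin N) ℝ) (D : Finset (Fin N)) (t : ℝ)
    (S : Finset (Fin N)) :
    detSq (Matrix.of fun i j => (if j ∈ D then t else 1) * Z i j) S
      = (t ^ 2) ^ (S ∩ D).card * detSq Z S := by
  classical
  by_cases h : S.card = p
  · rw [detSq, detSq, dif_pos h, dif_pos h]
    have := Matrix.det_mul_row (fun j : Fin p => if (S.orderIsoOfFin h j : Fin N) ∈ D then t else 1)
      (Matrix.of fun i j : Fin p => Z i ((S.orderIsoOfFin h j : Fin N)))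
    rw [show (Matrix.of fun i j : Fin p =>
          Matrix.of (fun i j => (if j ∈ D then t else 1) * Z i j) i ((S.orderIsoOfFin h j : Fin N)))
        = Matrix.of (fun i j : Fin p => (if (S.orderIsoOfFin h j : Fin N) ∈ D then t else 1) *
            (Matrix.of fun i j : Fin p => Z i ((S.orderIsoOfFin h j : Fin N))) i j) from rfl]
    rw [this, mul_pow]
    congr 1
    have hprod : (∏ j : Fin p, if (S.orderIsoOfFin h j : Fin N) ∈ D then t else 1)
        = ∏ s ∈ S, (if s ∈ D then t else 1) := by
      refine Finset.prod_nbij (fun j => (S.orderIsoOfFin h j : Fin N)) ?_ ?_ ?_ ?_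
      · intro j _; exact (S.orderIsoOfFin h j).2
      · intro a _ b _ hab
        exact (S.orderEmbOfFin h).injective hab
      · intro s hs
        rcases Set.mem_range.mp (by rw [Finset.range_orderEmbOfFin S h]; exact hs :
          s ∈ Set.range (S.orderEmbOfFin h)) with ⟨j, hj⟩
        exact ⟨j, Finset.mem_coe.mpr (Finset.mem_univ j), hj⟩
      · intro j _; rfl
    rw [hprod, ← Finset.prod_filter_mul_prod_filter_not S (· ∈ D)]
    have h2 : ∏ s ∈ S.filter (fun s => ¬ s ∈ D), (if s ∈ D then t else 1) = 1 :=
      Finset.prod_eq_one fun s hs => if_neg (Finset.mem_filter.mp hs).2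
    have h1 : ∏ s ∈ S.filter (· ∈ D), (if s ∈ D then t else 1) = t ^ (S ∩ D).card := by
      rw [← Finset.filter_mem_eq_inter, Finset.prod_congr rfl
        (fun s hs => if_pos (Finset.mem_filter.mp hs).2), Finset.prod_const]
    rw [h1, h2, mul_one, ← pow_mul, ← pow_mul, Nat.mul_comm]
  · rw [detSq, detSq, dif_neg h, dif_neg h, mul_zero]

theorem gram_scale {p N : ℕ} (Z : Matrix (Fin p) (Fin N) ℝ) (hZ : Z * Zᵀ = 1)
    (D : Finset (Fin N)) (t : ℝ) :
    (Matrix.of fun i j => (if j ∈ D then t else 1) * Z i j)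
        * (Matrix.of fun i j => (if j ∈ D then t else 1) * Z i j)ᵀ
      = 1 + (t ^ 2 - 1) • Matrix.of (fun i i' : Fin p => ∑ j ∈ D, Z i j * Z i' j) := by
  classical
  ext i k
  have hZik := congrFun (congrFun hZ i) k
  rw [Matrix.mul_apply] at hZik
  simp only [Matrix.transpose_apply] at hZik
  simp only [Matrix.mul_apply, Matrix.transpose_apply, Matrix.of_apply, Matrix.add_apply,
    Matrix.smul_apply, smul_eq_mul]
  have hsplit : ∑ j : Fin N, ((if j ∈ D then t else 1) * Z i j) * ((if j ∈ D then t else 1) * Z k j)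
      = ∑ j : Fin N, (Z i j * Z k j + (t ^ 2 - 1) * (if j ∈ D then Z i j * Z k j else 0)) := by
    refine Finset.sum_congr rfl fun j _ => ?_
    by_cases hj : j ∈ D <;> simp [hj] <;> ring
  rw [hsplit, Finset.sum_add_distrib, ← Finset.mul_sum]
  have : ∑ j : Fin N, (if j ∈ D then Z i j * Z k j else 0) = ∑ j ∈ D, Z i j * Z k j := by
    rw [Finset.sum_ite_mem, Finset.univ_inter]
  rw [this, hZik]


theorem eig_le_one {p : ℕ} {B : Matrix (Fin p) (Fin p) ℝ} (hB : B.PosSemidef)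
    (h1B : (1 - B).PosSemidef) (i : Fin p) : hB.1.eigenvalues i ≤ 1 := by
  classical
  set v : EuclideanSpace ℝ (Fin p) := hB.1.eigenvectorBasis i with hv
  have hnorm : ‖v‖ = 1 := hB.1.eigenvectorBasis.orthonormal.1 i
  have hvv : dotProduct (star ⇑v) (⇑v) = 1 := by
    have := EuclideanSpace.inner_eq_star_dotProduct v v
    rw [inner_self_eq_norm_sq_to_K, hnorm] at this
    simpa [dotProduct, WithLp.equiv] using this.symm
  have hval := hB.1.eigenvalues_eq i
  have hpos := h1B.re_dotProduct_nonneg (⇑v)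
  rw [Matrix.sub_mulVec, Matrix.one_mulVec, dotProduct_sub, hvv] at hpos
  simp only [RCLike.re_to_real] at hpos hval
  rw [hval]
  linarith

theorem det_one_add_smul {p : ℕ} {B : Matrix (Fin p) (Fin p) ℝ} (hB : B.IsHermitian) (c : ℝ) :
    Matrix.det (1 + c • B) = ∏ i, (1 + c * hB.eigenvalues i) := by
  classical
  set U : Matrix (Fin p) (Fin p) ℝ := (hB.eigenvectorUnitary : Matrix (Fin p) (Fin p) ℝ) with hU
  have hUU : U * star U = 1 := (Matrix.mem_unitaryGroup_iff).mp hB.eigenvectorUnitary.2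
  have hspec := hB.spectral_theorem
  rw [Unitary.conjStarAlgAut_apply] at hspec
  have key : 1 + c • B = U * (Matrix.diagonal (fun i => 1 + c * hB.eigenvalues i)) * star U := by
    have hdiag : Matrix.diagonal (fun i => 1 + c * hB.eigenvalues i)
        = 1 + c • Matrix.diagonal (RCLike.ofReal ∘ hB.eigenvalues) := by
      rw [← Matrix.diagonal_one, ← Matrix.diagonal_smul, ← Matrix.diagonal_add]
      rfl
    rw [hdiag, Matrix.mul_add, Matrix.add_mul, Matrix.mul_smul, Matrix.smul_mul,
      ← hspec]
    rw [show U * (1 : Matrix (Fin p) (Fin p) ℝ) = U from mul_one U, hUU]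
  have hUU' : star U * U = 1 := (Matrix.mem_unitaryGroup_iff').mp hB.eigenvectorUnitary.2
  rw [key, Matrix.det_mul, Matrix.det_mul, mul_comm, ← mul_assoc, ← Matrix.det_mul, hUU',
    Matrix.det_one, one_mul, Matrix.det_diagonal]


theorem weier {ι : Type*} (s : Finset ι) (f : ι → ℝ) (h0 : ∀ i ∈ s, 0 ≤ f i)
    (h1 : ∀ i ∈ s, f i ≤ 1) : 1 - ∑ i ∈ s, f i ≤ ∏ i ∈ s, (1 - f i) := by
  classical
  induction s using Finset.induction_on with
  | empty => simp
  | @insert a s ha ih =>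
    rw [Finset.sum_insert ha, Finset.prod_insert ha]
    have hprod : 1 - ∑ i ∈ s, f i ≤ ∏ i ∈ s, (1 - f i) :=
      ih (fun i hi => h0 i (Finset.mem_insert_of_mem hi)) (fun i hi => h1 i (Finset.mem_insert_of_mem hi))
    have hpn : (0:ℝ) ≤ ∏ i ∈ s, (1 - f i) :=
      Finset.prod_nonneg fun i hi => by linarith [h1 i (Finset.mem_insert_of_mem hi)]
    have ha0 := h0 a (Finset.mem_insert_self a s)
    have ha1 := h1 a (Finset.mem_insert_self a s)
    have hsum : 0 ≤ ∑ i ∈ s, f i :=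
      Finset.sum_nonneg fun i hi => h0 i (Finset.mem_insert_of_mem hi)
    nlinarith [hprod, hpn, ha0, ha1, hsum,
      mul_le_mul_of_nonneg_left hprod (by linarith : (0:ℝ) ≤ 1 - f a)]

theorem final_ineq {p : ℕ} (μ : Fin p → ℝ) (h0 : ∀ i, 0 ≤ μ i) (h1 : ∀ i, μ i ≤ 1) :
    1 - (∏ i, (1 - μ i)) - (∑ i, μ i * ∏ j ∈ Finset.univ.erase i, (1 - μ j))
      ≤ (1 - ∏ i, (1 - μ i)) ^ 2 := by
  classical
  set Q0 := ∏ i, (1 - μ i) with hQ0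
  have hQ0n : 0 ≤ Q0 := Finset.prod_nonneg fun i _ => by linarith [h1 i]
  have hW : 1 - ∑ i, μ i ≤ Q0 := weier Finset.univ μ (fun i _ => h0 i) (fun i _ => h1 i)
  have hterm : ∀ i : Fin p, μ i * Q0 ≤ μ i * ∏ j ∈ Finset.univ.erase i, (1 - μ j) := by
    intro i
    have hE : (1 - μ i) * ∏ j ∈ Finset.univ.erase i, (1 - μ j) = Q0 :=
      Finset.mul_prod_erase Finset.univ (fun j => 1 - μ j) (Finset.mem_univ i)
    have hEn : 0 ≤ ∏ j ∈ Finset.univ.erase i, (1 - μ j) :=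
      Finset.prod_nonneg fun j _ => by linarith [h1 j]
    have : Q0 ≤ ∏ j ∈ Finset.univ.erase i, (1 - μ j) := by nlinarith [h0 i, h1 i, hEn, hE]
    exact mul_le_mul_of_nonneg_left this (h0 i)
  have hq1 : Q0 * (∑ i, μ i) ≤ ∑ i, μ i * ∏ j ∈ Finset.univ.erase i, (1 - μ j) := by
    rw [Finset.mul_sum]
    exact Finset.sum_le_sum fun i _ => by
      rw [mul_comm]; exact hterm i
  nlinarith [hq1, hW, hQ0n]

theorem psd_pair {p N : ℕ} (Z : Matrix (Fin p) (Fin N) ℝ) (hZ : Z * Zᵀ = 1)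
    (D : Finset (Fin N)) :
    (Matrix.of fun i i' : Fin p => ∑ j ∈ D, Z i j * Z i' j).PosSemidef ∧
    ((1 : Matrix (Fin p) (Fin p) ℝ) - Matrix.of (fun i i' : Fin p => ∑ j ∈ D, Z i j * Z i' j)).PosSemidef := by
  classical
  constructor
  · have : (Matrix.of fun i i' : Fin p => ∑ j ∈ D, Z i j * Z i' j)
        = (Matrix.of fun i j => if j ∈ D then Z i j else 0)
          * (Matrix.of fun i j => if j ∈ D then Z i j else 0)ᴴ := by
      ext i k
      simp only [Matrix.mul_apply, Matrix.conjTranspose_apply, Matrix.of_apply, star_trivial]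
      symm
      calc ∑ x : Fin N, (if x ∈ D then Z i x else 0) * (if x ∈ D then Z k x else 0)
          = ∑ x : Fin N, (if x ∈ D then Z i x * Z k x else 0) := by
            refine Finset.sum_congr rfl fun j _ => ?_
            by_cases hj : j ∈ D <;> simp [hj]
        _ = ∑ j ∈ D, Z i j * Z k j := by rw [Finset.sum_ite_mem, Finset.univ_inter]
    rw [this]
    exact Matrix.posSemidef_self_mul_conjTranspose _
  · have : (1 : Matrix (Fin p) (Fin p) ℝ) - Matrix.of (fun i i' : Fin p => ∑ j ∈ D, Z i j * Z i' j)
        = (Matrix.of fun i j => if j ∈ D then 0 else Z i j)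
          * (Matrix.of fun i j => if j ∈ D then 0 else Z i j)ᴴ := by
      ext i k
      have hZik := congrFun (congrFun hZ i) k
      rw [Matrix.mul_apply] at hZik
      simp only [Matrix.transpose_apply] at hZik
      simp only [Matrix.mul_apply, Matrix.conjTranspose_apply, Matrix.of_apply, star_trivial,
        Matrix.sub_apply]
      have split : ∑ j : Fin N, Z i j * Z k j
          = (∑ j : Fin N, if j ∈ D then Z i j * Z k j else 0)
            + ∑ j : Fin N, (if j ∈ D then 0 else Z i j) * (if j ∈ D then 0 else Z k j) := by
        rw [← Finset.sum_add_distrib]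
        refine Finset.sum_congr rfl fun j _ => ?_
        by_cases hj : j ∈ D <;> simp [hj]
      have hD : (∑ j : Fin N, if j ∈ D then Z i j * Z k j else 0) = ∑ j ∈ D, Z i j * Z k j := by
        rw [Finset.sum_ite_mem, Finset.univ_inter]
      rw [← hZik, split, hD]
      ring
    rw [this]
    exact Matrix.posSemidef_self_mul_conjTranspose _


theorem fin_derivative_prod {β : Type*} [DecidableEq β] (s : Finset β) (f : β → Polynomial ℝ) :
    Polynomial.derivative (∏ i ∈ s, f i)
      = ∑ i ∈ s, (∏ j ∈ s.erase i, f j) * Polynomial.derivative (f i) := by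
  classical
  induction s using Finset.induction_on with
  | empty => simp
  | @insert a s ha ih =>
    rw [Finset.prod_insert ha, Polynomial.derivative_mul, ih, Finset.sum_insert ha,
      Finset.erase_insert ha]
    rw [Finset.mul_sum]
    congr 1
    · ring
    · refine Finset.sum_congr rfl fun i hi => ?_
      have hia : i ≠ a := fun h => ha (h ▸ hi)
      rw [Finset.erase_insert_of_ne (Ne.symm hia),
        Finset.prod_insert (fun h => ha (Finset.mem_of_mem_erase h))]
      ring

theorem poly_extract {α β : Type*} [Fintype α] [Fintype β] [DecidableEq β] (c : α → ℝ) (m : α → ℕ) (μ : β → ℝ)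
    (heval : ∀ z : ℝ, 0 ≤ z → ∑ S, c S * z ^ m S = ∏ i, (1 + (z - 1) * μ i)) :
    ∑ S, (if m S = 1 then c S else 0)
      = ∑ i, μ i * ∏ j ∈ Finset.univ.erase i, (1 - μ j) := by
  classical
  set P : Polynomial ℝ := ∑ S, Polynomial.C (c S) * Polynomial.X ^ m S with hP
  set Q : Polynomial ℝ := ∏ i, (Polynomial.C (1 - μ i) + Polynomial.C (μ i) * Polynomial.X) with hQ
  have hPe : ∀ z : ℝ, P.eval z = ∑ S, c S * z ^ m S := by
    intro z
    rw [hP, Polynomial.eval_finset_sum]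
    simp
  have hQe : ∀ z : ℝ, Q.eval z = ∏ i, (1 + (z - 1) * μ i) := by
    intro z
    rw [hQ, Polynomial.eval_prod]
    refine Finset.prod_congr rfl fun i _ => ?_
    simp
    ring
  have hPQ : P = Q := by
    apply Polynomial.eq_of_infinite_eval_eq
    apply Set.Infinite.mono (s := Set.Ici (0:ℝ)) ?_ (Set.Ici_infinite 0)
    intro z hz
    simp only [Set.mem_setOf_eq]
    rw [hPe, hQe]
    exact heval z hz
  have hd := congrArg (fun R : Polynomial ℝ => R.derivative.eval 0) hPQ
  have hdP : P.derivative.eval 0 = ∑ S, (if m S = 1 then c S else 0) := by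
    rw [hP, Polynomial.derivative_sum, Polynomial.eval_finset_sum]
    refine Finset.sum_congr rfl fun S _ => ?_
    rw [Polynomial.derivative_C_mul, Polynomial.derivative_X_pow]
    rcases hm : m S with _ | n
    · simp
    · rcases n with _ | n
      · simp
      · simp [pow_succ]
  have hdQ : Q.derivative.eval 0 = ∑ i, μ i * ∏ j ∈ Finset.univ.erase i, (1 - μ j) := by
    rw [hQ, fin_derivative_prod, Polynomial.eval_finset_sum]
    refine Finset.sum_congr rfl fun i _ => ?_
    rw [Polynomial.eval_mul, Polynomial.eval_prod]
    have e1 : ∀ j : β, Polynomial.eval 0 (Polynomial.C (1 - μ j) + Polynomial.C (μ j) * Polynomial.X)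
        = 1 - μ j := by intro j; simp
    have e2 : Polynomial.eval 0 (Polynomial.derivative
        (Polynomial.C (1 - μ i) + Polynomial.C (μ i) * Polynomial.X)) = μ i := by simp
    rw [Finset.prod_congr rfl (fun j _ => e1 j), e2, mul_comm]
  rw [hdP, hdQ] at hd
  exact hd


end BK


end BKAux

/-- Theorem 1: for the increasing event 𝔄 generated by distinct simple points
x₁,…,xₙ with 1 < n ≤ N − p, one has P(φ ∈ 𝔄∘𝔄) ≤ P(φ ∈ 𝔄)². -/
theorem bk_self_simple_points {N p n : ℕ} (hp : 1 < p) (hpN : p < N)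
    (Z : Matrix (Fin p) (Fin N) ℝ) (hZ : Z * Zᵀ = 1)
    (x : Fin n → Fin N) (hx : Function.Injective x)
    (hn : 1 < n) (hnNp : n ≤ N - p) :
    prDP Z {K | ∃ i j : Fin n, i ≠ j ∧ x i ∈ K ∧ x j ∈ K}
      ≤ (prDP Z {A | ∃ i : Fin n, x i ∈ A}) ^ 2 := by
  classical
  set D : Finset (Fin N) := Finset.image x Finset.univ with hD
  set B := Matrix.of (fun i i' : Fin p => ∑ j ∈ D, Z i j * Z i' j) with hB
  obtain ⟨hBpsd, h1Bpsd⟩ := BK.psd_pair Z hZ D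
  set μ := hBpsd.1.eigenvalues with hμ
  have h0μ : ∀ i, 0 ≤ μ i := hBpsd.eigenvalues_nonneg
  have h1μ : ∀ i, μ i ≤ 1 := BK.eig_le_one hBpsd h1Bpsd
  have heval : ∀ z : ℝ, 0 ≤ z →
      ∑ S : Finset (Fin N), detSq Z S * z ^ (S ∩ D).card = ∏ i, (1 + (z - 1) * μ i) := by
    intro z hz
    set t := Real.sqrt z with htdef
    have ht : t ^ 2 = z := Real.sq_sqrt hz
    calc ∑ S : Finset (Fin N), detSq Z S * z ^ (S ∩ D).card
        = ∑ S : Finset (Fin N), detSq (Matrix.of fun i j => (if j ∈ D then t else 1) * Z i j) S := by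
          refine Finset.sum_congr rfl fun S _ => ?_
          rw [BK.detSq_scale, ht, mul_comm]
      _ = Matrix.det ((Matrix.of fun i j => (if j ∈ D then t else 1) * Z i j)
            * (Matrix.of fun i j => (if j ∈ D then t else 1) * Z i j)ᵀ) := BK.sum_detSq _
      _ = Matrix.det (1 + (t ^ 2 - 1) • B) := by rw [BK.gram_scale Z hZ D t]
      _ = ∏ i, (1 + (t ^ 2 - 1) * μ i) := BK.det_one_add_smul hBpsd.1 _
      _ = ∏ i, (1 + (z - 1) * μ i) := by rw [ht]
  have htot : ∑ S : Finset (Fin N), detSq Z S = 1 := by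
    have := heval 1 zero_le_one
    simpa using this
  have hq0 : ∑ S : Finset (Fin N), (if (S ∩ D).card = 0 then detSq Z S else 0)
      = ∏ i, (1 - μ i) := by
    have h := heval 0 le_rfl
    calc ∑ S : Finset (Fin N), (if (S ∩ D).card = 0 then detSq Z S else 0)
        = ∑ S : Finset (Fin N), detSq Z S * (0:ℝ) ^ (S ∩ D).card := by
          refine Finset.sum_congr rfl fun S _ => ?_
          by_cases hm : (S ∩ D).card = 0
          · rw [if_pos hm, hm, pow_zero, mul_one]
          · rw [if_neg hm, zero_pow hm, mul_zero]
      _ = ∏ i, (1 + ((0:ℝ) - 1) * μ i) := h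
      _ = ∏ i, (1 - μ i) := by
          refine Finset.prod_congr rfl fun i _ => ?_
          ring
  have hq1 : ∑ S : Finset (Fin N), (if (S ∩ D).card = 1 then detSq Z S else 0)
      = ∑ i, μ i * ∏ j ∈ Finset.univ.erase i, (1 - μ j) :=
    BK.poly_extract (detSq Z) (fun S => (S ∩ D).card) μ heval
  have hmem1 : ∀ S : Finset (Fin N),
      (S ∈ {A : Finset (Fin N) | ∃ i : Fin n, x i ∈ A}) ↔ ¬ (S ∩ D).card = 0 := by
    intro S
    simp only [Set.mem_setOf_eq]
    rw [show ¬ (S ∩ D).card = 0 ↔ (S ∩ D).Nonempty from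
      ⟨fun h => Finset.card_pos.mp (Nat.pos_of_ne_zero h),
       fun h hc => (Nat.pos_iff_ne_zero.mp (Finset.card_pos.mpr h)) hc⟩]
    constructor
    · rintro ⟨i, hi⟩
      exact ⟨x i, Finset.mem_inter.mpr ⟨hi, Finset.mem_image_of_mem x (Finset.mem_univ i)⟩⟩
    · rintro ⟨a, ha⟩
      obtain ⟨haS, haD⟩ := Finset.mem_inter.mp ha
      obtain ⟨i, _, rfl⟩ := Finset.mem_image.mp haD
      exact ⟨i, haS⟩
  have hmem2 : ∀ S : Finset (Fin N),
      (S ∈ {K : Finset (Fin N) | ∃ i j : Fin n, i ≠ j ∧ x i ∈ K ∧ x j ∈ K})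
        ↔ 2 ≤ (S ∩ D).card := by
    intro S
    simp only [Set.mem_setOf_eq]
    rw [show (2 : ℕ) ≤ (S ∩ D).card ↔ 1 < (S ∩ D).card from Iff.rfl, Finset.one_lt_card]
    constructor
    · rintro ⟨i, j, hij, hi, hj⟩
      refine ⟨x i, Finset.mem_inter.mpr ⟨hi, Finset.mem_image_of_mem x (Finset.mem_univ i)⟩,
        x j, Finset.mem_inter.mpr ⟨hj, Finset.mem_image_of_mem x (Finset.mem_univ j)⟩, ?_⟩
      exact fun h => hij (hx h)
    · rintro ⟨a, ha, b, hb, hab⟩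
      obtain ⟨haS, haD⟩ := Finset.mem_inter.mp ha
      obtain ⟨hbS, hbD⟩ := Finset.mem_inter.mp hb
      obtain ⟨i, _, rfl⟩ := Finset.mem_image.mp haD
      obtain ⟨j, _, rfl⟩ := Finset.mem_image.mp hbD
      exact ⟨i, j, fun h => hab (congrArg x h), haS, hbS⟩
  have hA : prDP Z {A : Finset (Fin N) | ∃ i : Fin n, x i ∈ A} = 1 - ∏ i, (1 - μ i) := by
    have hsplit : (∑ S : Finset (Fin N),
          if S ∈ {A : Finset (Fin N) | ∃ i : Fin n, x i ∈ A} then detSq Z S else 0)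
        = (∑ S : Finset (Fin N), detSq Z S)
          - ∑ S : Finset (Fin N), (if (S ∩ D).card = 0 then detSq Z S else 0) := by
      rw [← Finset.sum_sub_distrib]
      refine Finset.sum_congr rfl fun S _ => ?_
      by_cases hm : (S ∩ D).card = 0
      · rw [if_neg (fun h => (hmem1 S).mp h hm), if_pos hm, sub_self]
      · rw [if_pos ((hmem1 S).mpr hm), if_neg hm, sub_zero]
    rw [prDP]
    rw [htot, hq0] at hsplit
    refine Eq.trans ?_ hsplit
    refine Finset.sum_congr rfl fun S _ => ?_
    congr 1
  have hAA : prDP Z {K : Finset (Fin N) | ∃ i j : Fin n, i ≠ j ∧ x i ∈ K ∧ x j ∈ K}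
      = 1 - (∏ i, (1 - μ i)) - ∑ i, μ i * ∏ j ∈ Finset.univ.erase i, (1 - μ j) := by
    have hsplit : (∑ S : Finset (Fin N),
          if S ∈ {K : Finset (Fin N) | ∃ i j : Fin n, i ≠ j ∧ x i ∈ K ∧ x j ∈ K}
          then detSq Z S else 0)
        = ((∑ S : Finset (Fin N), detSq Z S)
          - ∑ S : Finset (Fin N), (if (S ∩ D).card = 0 then detSq Z S else 0))
          - ∑ S : Finset (Fin N), (if (S ∩ D).card = 1 then detSq Z S else 0) := by
      rw [← Finset.sum_sub_distrib, ← Finset.sum_sub_distrib]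
      refine Finset.sum_congr rfl fun S _ => ?_
      by_cases hm0 : (S ∩ D).card = 0
      · rw [if_neg (fun h => by have := (hmem2 S).mp h; omega), if_pos hm0,
          if_neg (by omega), sub_self, sub_zero]
      · by_cases hm1 : (S ∩ D).card = 1
        · rw [if_neg (fun h => by have := (hmem2 S).mp h; omega), if_neg hm0, if_pos hm1,
            sub_zero, sub_self]
        · rw [if_pos ((hmem2 S).mpr (by omega)), if_neg hm0, if_neg hm1, sub_zero, sub_zero]
    rw [prDP]
    rw [htot, hq0, hq1] at hsplit
    refine Eq.trans ?_ hsplit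
    refine Finset.sum_congr rfl fun S _ => ?_
    congr 1
  rw [hA, hAA]
  exact BK.final_ineq μ h0μ h1μ
end

section
/- Let x₁,…,xₙ ∈ {1,…,N} be distinct points with n ≥ 2, and let k ∈ {2,…,n}. Then P({x₁,…,xₙ} ⊆ φᶜ) · P(({x₂,…,xₙ} ∖ {x_k}) ⊆ φᶜ) ≤ P({x₂,…,xₙ} ⊆ φᶜ) · P(({x₁,…,xₙ} ∖ {x_k}) ⊆ φᶜ); equivalently, when P({x₂,…,xₙ} ⊆ φᶜ) > 0 the conditional probability P(x₁ ∈ φᶜ | x_j ∈ φᶜ for all j = 2,…,n) is at most P(x₁ ∈ φᶜ | x_j ∈ φᶜ for all j ∈ {2,…,n} ∖ {k}). -/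
open Matrix

section Aux

open Finset Equiv Equiv.Perm

variable {p m : ℕ}


variable {p m : ℕ}

private theorem cb_aux {A : Matrix (Fin p) (Fin m) ℝ} {B : Matrix (Fin m) (Fin p) ℝ}
    {g : Fin p → Fin m} (H : ¬Function.Injective g) :
    (∑ σ : Perm (Fin p), (Equiv.Perm.sign σ : ℝ) * ∏ x, A (σ x) (g x) * B (g x) x) = 0 := by
  obtain ⟨i, j, hgij, hij⟩ : ∃ i j, g i = g j ∧ i ≠ j := by
    rw [Function.Injective] at H
    push_neg at H
    obtain ⟨i, j, h1, h2⟩ := H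
    exact ⟨i, j, h1, h2⟩
  exact
    sum_involution (fun σ _ => σ * Equiv.swap i j)
      (fun σ _ => by
        have : (∏ x, A (σ x) (g x)) = ∏ x, A ((σ * Equiv.swap i j) x) (g x) :=
          Fintype.prod_equiv (Equiv.swap i j) _ _ (by simp [Equiv.apply_swap_eq_self hgij])
        simp [this, Equiv.Perm.sign_swap hij, -Equiv.Perm.sign_swap', prod_mul_distrib])
      (fun σ _ _ => (not_congr Equiv.mul_swap_eq_iff).mpr hij) (fun _ _ => mem_univ _)
      fun σ _ => Equiv.mul_swap_involutive i j σ

private theorem perm_sum_det (M N : Matrix (Fin p) (Fin p) ℝ) :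
    ∑ τ : Perm (Fin p), ∑ σ : Perm (Fin p),
      (Equiv.Perm.sign σ : ℝ) * ∏ i, M (σ i) (τ i) * N (τ i) i = det M * det N := by
  classical
  rw [← det_mul]; symm
  calc
    det (M * N) = ∑ q : Fin p → Fin p, ∑ σ : Perm (Fin p),
        (Equiv.Perm.sign σ : ℝ) * ∏ i, M (σ i) (q i) * N (q i) i := by
      simp only [det_apply', Matrix.mul_apply, prod_univ_sum, mul_sum, Fintype.piFinset_univ]
      rw [Finset.sum_comm]
    _ = ∑ q ∈ univ.filter (fun q : Fin p → Fin p => Function.Bijective q),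
        ∑ σ : Perm (Fin p), (Equiv.Perm.sign σ : ℝ) * ∏ i, M (σ i) (q i) * N (q i) i := by
      refine (sum_subset (filter_subset _ _) fun f _ hbij ↦ ?_).symm
      refine cb_aux fun hinj => ?_
      simp only [mem_filter, mem_univ, true_and] at hbij
      exact hbij (Finite.injective_iff_bijective.mp hinj)
    _ = ∑ τ : Perm (Fin p), ∑ σ : Perm (Fin p),
        (Equiv.Perm.sign σ : ℝ) * ∏ i, M (σ i) (τ i) * N (τ i) i :=
      sum_bij (fun q h ↦ Equiv.ofBijective q (mem_filter.1 h).2) (fun _ _ ↦ mem_univ _)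
        (fun _ _ _ _ h ↦ by injection h)
        (fun b _ ↦ ⟨b, mem_filter.2 ⟨mem_univ _, b.bijective⟩, coe_fn_injective rfl⟩) fun _ _ ↦ rfl

theorem cauchyBinet (A : Matrix (Fin p) (Fin m) ℝ) (B : Matrix (Fin m) (Fin p) ℝ) :
    det (A * B) = ∑ S : Finset (Fin m), if h : S.card = p then
      det (A.submatrix id (fun j => (S.orderIsoOfFin h j : Fin m))) *
      det (B.submatrix (fun j => (S.orderIsoOfFin h j : Fin m)) id) else 0 := by
  classical
  have e1 : det (A * B) = ∑ g : Fin p → Fin m, ∑ σ : Perm (Fin p),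
      (Equiv.Perm.sign σ : ℝ) * ∏ i, A (σ i) (g i) * B (g i) i := by
    simp only [det_apply', Matrix.mul_apply, prod_univ_sum, mul_sum, Fintype.piFinset_univ]
    rw [Finset.sum_comm]
  have step1 : det (A * B) = ∑ g ∈ univ.filter (fun g : Fin p → Fin m => Function.Injective g),
      ∑ σ : Perm (Fin p), (Equiv.Perm.sign σ : ℝ) * ∏ i, A (σ i) (g i) * B (g i) i := by
    rw [e1]
    exact (sum_subset (filter_subset _ _) fun g _ hg => cb_aux (by simpa using hg)).symm
  -- the pair-side summand
  set G : Finset (Fin m) × Perm (Fin p) → ℝ := fun P =>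
    if h : P.1.card = p then
      ∑ σ : Perm (Fin p), (Equiv.Perm.sign σ : ℝ) *
        ∏ i, A (σ i) ((P.1.orderIsoOfFin h (P.2 i) : Fin m)) *
          B ((P.1.orderIsoOfFin h (P.2 i) : Fin m)) i
    else 0 with hG
  have cardim : ∀ g : Fin p → Fin m, Function.Injective g → (univ.image g).card = p := by
    intro g hg
    rw [Finset.card_image_of_injective _ hg, card_univ, Fintype.card_fin]
  have step2 : ∑ g ∈ univ.filter (fun g : Fin p → Fin m => Function.Injective g),
      (∑ σ : Perm (Fin p), (Equiv.Perm.sign σ : ℝ) * ∏ i, A (σ i) (g i) * B (g i) i)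
      = ∑ P ∈ (univ.filter fun S : Finset (Fin m) => S.card = p) ×ˢ
          (univ : Finset (Perm (Fin p))), G P := by
    refine sum_bij' (i := fun g hg => (univ.image g,
        Equiv.ofBijective (fun idx => ((univ.image g).orderIsoOfFin
          (cardim g (by simpa using hg))).symm ⟨g idx, mem_image_of_mem g (mem_univ idx)⟩)
          (Finite.injective_iff_bijective.mp (fun a b hab => ?_))))
      (j := fun P hP => fun idx =>
        ((P.1.orderIsoOfFin (by simpa using (mem_product.mp hP).1) (P.2 idx) : Fin m)))
      ?_ ?_ ?_ ?_ ?_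
    · -- injectivity of the constructed map
      have hginj : Function.Injective g := by simpa using hg
      exact hginj (Subtype.mk_eq_mk.mp ((((univ.image g).orderIsoOfFin
        (cardim g hginj)).symm.injective.eq_iff).mp hab))
    · -- hi : lands in pairs
      intro g hg
      have hginj : Function.Injective g := by simpa using hg
      simp [mem_product, cardim g hginj]
    · -- hj : lands in filter Injective
      intro P hP
      simp only [mem_filter, mem_univ, true_and]
      intro a b hab
      have := (P.1.orderIsoOfFin (by simpa using (mem_product.mp hP).1)).injective
        (Subtype.coe_injective hab)
      exact P.2.injective this
    · -- left_inv : j (i g) = g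
      intro g hg
      funext idx
      simp only [OrderIso.apply_symm_apply, Equiv.ofBijective_apply]
    · -- right_inv : i (j P) = P
      intro P hP
      obtain ⟨S, τ⟩ := P
      obtain ⟨hS, -⟩ := mem_product.mp hP
      have hScard : S.card = p := by simpa using hS
      have himg : univ.image (fun idx => ((S.orderIsoOfFin hScard (τ idx) : Fin m))) = S := by
        ext a
        simp only [mem_image, mem_univ, true_and]
        constructor
        · rintro ⟨i, rfl⟩; exact (S.orderIsoOfFin hScard (τ i)).2
        · intro ha
          exact ⟨τ.symm ((S.orderIsoOfFin hScard).symm ⟨a, ha⟩), by simp⟩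
      refine Prod.ext himg (Equiv.ext fun idx => ?_)
      · -- perm component
        have : ∀ (T : Finset (Fin m)) (hT : T = S) (hTc : T.card = p)
            (y : {x // x ∈ T}) (hy : (y : Fin m) = (S.orderIsoOfFin hScard (τ idx) : Fin m)),
            (T.orderIsoOfFin hTc).symm y = τ idx := by
          rintro T rfl hTc y hy
          apply (T.orderIsoOfFin hTc).injective
          rw [OrderIso.apply_symm_apply]
          exact Subtype.ext (by rw [hy])
        exact this _ himg (by rw [himg]; exact hScard) _ rfl
    · -- values match
      intro g hg
      have hginj : Function.Injective g := by simpa using hg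
      rw [hG]
      simp only [dif_pos (cardim g hginj)]
      refine Finset.sum_congr rfl fun σ _ => ?_
      congr 1
      refine Finset.prod_congr rfl fun i _ => ?_
      simp [OrderIso.apply_symm_apply]
  have h3 : (∑ S : Finset (Fin m), if h : S.card = p then
      det (A.submatrix id (fun j => (S.orderIsoOfFin h j : Fin m))) *
      det (B.submatrix (fun j => (S.orderIsoOfFin h j : Fin m)) id) else 0)
      = ∑ S ∈ univ.filter (fun S : Finset (Fin m) => S.card = p), (if h : S.card = p then
      det (A.submatrix id (fun j => (S.orderIsoOfFin h j : Fin m))) *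
      det (B.submatrix (fun j => (S.orderIsoOfFin h j : Fin m)) id) else 0) :=
    (sum_subset (filter_subset _ _) (fun S _ hS => dif_neg (by simpa using hS))).symm
  rw [step1, step2, Finset.sum_product, h3]
  refine Finset.sum_congr rfl fun S hS => ?_
  have h : S.card = p := (mem_filter.mp hS).2
  rw [dif_pos h, hG]
  simp only [dif_pos h]
  exact perm_sum_det (A.submatrix id (fun j => (S.orderIsoOfFin h j : Fin m)))
    (B.submatrix (fun j => (S.orderIsoOfFin h j : Fin m)) id)

section Aux2

open Finset

variable {N : ℕ}

/-- submatrix of `M` given by rows and columns in `S` -/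
def msub {N : ℕ} (M : Matrix (Fin N) (Fin N) ℝ) (S : Finset (Fin N)) :
    Matrix {x // x ∈ S} {x // x ∈ S} ℝ :=
  M.submatrix (fun i => (i : Fin N)) (fun i => (i : Fin N))


/-- extension of a vector on `S` by zero -/
noncomputable def extFun {S : Finset (Fin N)} (v : {x // x ∈ S} → ℝ) : Fin N → ℝ :=
  fun a => if h : a ∈ S then v ⟨a, h⟩ else 0

lemma sum_ext {S T : Finset (Fin N)} (hST : S ⊆ T) (v : {x // x ∈ S} → ℝ) (F : Fin N → ℝ) :
    (∑ t : {x // x ∈ T}, extFun v t * F t) = ∑ s : {x // x ∈ S}, v s * F s := by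
  rw [Finset.sum_coe_sort T (fun a => extFun v a * F a),
    ← Finset.sum_subset hST (fun a _ haS => by simp [extFun, dif_neg haS]),
    ← Finset.sum_coe_sort S (fun a => extFun v a * F a)]
  refine Finset.sum_congr rfl fun s _ => ?_
  simp [extFun]

lemma quad_restrict (M : Matrix (Fin N) (Fin N) ℝ) {S T : Finset (Fin N)} (hST : S ⊆ T)
    (v : {x // x ∈ S} → ℝ) :
    (fun t : {x // x ∈ T} => extFun v t) ⬝ᵥ (msub M T *ᵥ fun t : {x // x ∈ T} => extFun v t)
      = v ⬝ᵥ (msub M S *ᵥ v) := by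
  have inner : ∀ b : Fin N,
      (∑ t' : {x // x ∈ T}, M b t' * extFun v t') = ∑ s' : {x // x ∈ S}, M b s' * v s' := by
    intro b
    rw [show (∑ t' : {x // x ∈ T}, M b t' * extFun v t')
        = ∑ t' : {x // x ∈ T}, extFun v t' * M b t' by
      exact Finset.sum_congr rfl fun _ _ => mul_comm _ _]
    rw [sum_ext hST v (fun c => M b c)]
    exact Finset.sum_congr rfl fun _ _ => mul_comm _ _
  show (∑ t : {x // x ∈ T}, extFun v t * ∑ t' : {x // x ∈ T}, M t t' * extFun v t') = _
  rw [show (∑ t : {x // x ∈ T}, extFun v t * ∑ t' : {x // x ∈ T}, M t t' * extFun v t')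
      = ∑ t : {x // x ∈ T}, extFun v t * ∑ s' : {x // x ∈ S}, M t s' * v s' by
    exact Finset.sum_congr rfl fun t _ => by rw [inner t]]
  exact sum_ext hST v (fun b => ∑ s' : {x // x ∈ S}, M b s' * v s')

lemma psd_det_nonneg {n : Type*} [Fintype n] [DecidableEq n] {M : Matrix n n ℝ}
    (hM : M.PosSemidef) : 0 ≤ det M := by
  exact hM.det_nonneg

lemma det_msub_zero_mono {M : Matrix (Fin N) (Fin N) ℝ} (hM : M.PosSemidef)
    {S T : Finset (Fin N)} (hST : S ⊆ T) (hS : det (msub M S) = 0) :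
    det (msub M T) = 0 := by
  obtain ⟨v, hv0, hvker⟩ := (Matrix.exists_mulVec_eq_zero_iff).mpr hS
  set w : {x // x ∈ T} → ℝ := fun t => extFun v t with hw
  have hw0 : w ≠ 0 := by
    obtain ⟨s, hs⟩ := Function.ne_iff.mp hv0
    refine Function.ne_iff.mpr ⟨⟨s, hST s.2⟩, ?_⟩
    simpa [hw, extFun, s.2] using hs
  have hq : w ⬝ᵥ (msub M T *ᵥ w) = 0 := by
    rw [hw]
    rw [quad_restrict M hST v, hvker, dotProduct_zero]
  have hker : msub M T *ᵥ w = 0 := by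
    have hpsd : (msub M T).PosSemidef := hM.submatrix _
    have := (hpsd.dotProduct_mulVec_zero_iff w).mp (by simpa using hq)
    exact this
  exact (Matrix.exists_mulVec_eq_zero_iff).mp ⟨w, hw0, hker⟩

lemma real_transpose_eq {n : Type*} {M : Matrix n n ℝ} (h : M.IsHermitian) : Mᵀ = M := by
  ext i j
  calc Mᵀ i j = star (M j i) := (star_trivial _).symm
    _ = Mᴴ i j := rfl
    _ = M i j := by rw [h.eq]

lemma quad_bound {n : Type*} [Fintype n] [DecidableEq n] {Q : Matrix n n ℝ}
    (hQ : Q.PosSemidef) (hdet : IsUnit Q.det) (w x : n → ℝ) :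
    2 * (x ⬝ᵥ w) - x ⬝ᵥ (Q *ᵥ x) ≤ w ⬝ᵥ (Q⁻¹ *ᵥ w) := by
  have hsym : Qᵀ = Q := real_transpose_eq hQ.1
  have hinv : Q * Q⁻¹ = 1 := Matrix.mul_nonsing_inv Q hdet
  have hinv' : Q⁻¹ * Q = 1 := Matrix.nonsing_inv_mul Q hdet
  have hsyminv : (Q⁻¹)ᵀ = Q⁻¹ := by rw [Matrix.transpose_nonsing_inv, hsym]
  set y := x - Q⁻¹ *ᵥ w with hy
  have h0 : 0 ≤ y ⬝ᵥ (Q *ᵥ y) := by simpa using hQ.dotProduct_mulVec_nonneg y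
  have e2 : Q *ᵥ y = Q *ᵥ x - w := by
    rw [hy, Matrix.mulVec_sub, Matrix.mulVec_mulVec, hinv, Matrix.one_mulVec]
  have eA : (Q⁻¹ *ᵥ w) ⬝ᵥ (Q *ᵥ x) = w ⬝ᵥ x := by
    rw [Matrix.dotProduct_mulVec]
    congr 1
    have hmv : Q⁻¹ *ᵥ w = w ᵥ* Q⁻¹ := by
      conv_lhs => rw [← hsyminv]
      exact Matrix.mulVec_transpose Q⁻¹ w
    rw [hmv, Matrix.vecMul_vecMul, hinv', Matrix.vecMul_one]
  have eB : (Q⁻¹ *ᵥ w) ⬝ᵥ w = w ⬝ᵥ (Q⁻¹ *ᵥ w) := dotProduct_comm _ _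
  have e3 : y ⬝ᵥ (Q *ᵥ y)
      = x ⬝ᵥ (Q *ᵥ x) - x ⬝ᵥ w - (w ⬝ᵥ x) + w ⬝ᵥ (Q⁻¹ *ᵥ w) := by
    rw [hy, e2, sub_dotProduct, dotProduct_sub, dotProduct_sub, eA, eB]
    ring
  have hcomm : w ⬝ᵥ x = x ⬝ᵥ w := dotProduct_comm _ _
  rw [e3, hcomm] at h0
  linarith

section Schur

variable {M : Matrix (Fin N) (Fin N) ℝ}

/-- the equivalence `↥t ⊕ Unit ≃ ↥(insert a t)` -/
noncomputable def insEquiv (t : Finset (Fin N)) (a : Fin N) (ha : a ∉ t) :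
    {x // x ∈ t} ⊕ Unit ≃ {x // x ∈ insert a t} :=
  Equiv.ofBijective
    (Sum.elim (fun i => ⟨i.1, Finset.mem_insert_of_mem i.2⟩)
      (fun _ => ⟨a, Finset.mem_insert_self a t⟩))
    (by
      constructor
      · rintro (i | i) (j | j) hij <;>
          simp only [Sum.elim_inl, Sum.elim_inr, Subtype.mk.injEq] at hij
        · exact congrArg Sum.inl (Subtype.ext hij)
        · exact absurd (hij ▸ i.2) ha
        · exact absurd (hij ▸ j.2) ha
        · rfl
      · rintro ⟨y, hy⟩
        rcases Finset.mem_insert.mp hy with rfl | hyt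
        · exact ⟨Sum.inr (), rfl⟩
        · exact ⟨Sum.inl ⟨y, hyt⟩, rfl⟩)

lemma det_msub_insert (hsym : Mᵀ = M) {t : Finset (Fin N)} {a : Fin N} (ha : a ∉ t)
    (hdet : IsUnit (msub M t).det) :
    det (msub M (insert a t))
      = det (msub M t) * (M a a -
          (fun i : {x // x ∈ t} => M i a) ⬝ᵥ ((msub M t)⁻¹ *ᵥ fun i : {x // x ∈ t} => M i a)) := by
  classical
  have hdet' := Matrix.det_submatrix_equiv_self (insEquiv t a ha) (msub M (insert a t))
  have hblocks : (msub M (insert a t)).submatrix (insEquiv t a ha) (insEquiv t a ha)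
      = Matrix.fromBlocks (msub M t) (Matrix.of fun (i : {x // x ∈ t}) (_ : Unit) => M i a)
          (Matrix.of fun (_ : Unit) (j : {x // x ∈ t}) => M a j)
          (Matrix.of fun (_ : Unit) (_ : Unit) => M a a) := by
    ext i j
    rcases i with i | i <;> rcases j with j | j <;> rfl
  haveI : Invertible (msub M t) := Matrix.invertibleOfIsUnitDet _ hdet
  rw [← hdet', hblocks, Matrix.det_fromBlocks₁₁]
  congr 1
  rw [Matrix.det_unique, Matrix.invOf_eq_nonsing_inv]
  simp only [Matrix.sub_apply, Matrix.of_apply]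
  congr 1
  simp only [Matrix.mul_apply, Matrix.of_apply, dotProduct, Matrix.mulVec, Finset.sum_mul]
  rw [Finset.sum_comm]
  simp only [Finset.mul_sum]
  refine Finset.sum_congr rfl fun i _ => ?_
  refine Finset.sum_congr rfl fun j _ => ?_
  have haij : M a (i : Fin N) = M (i : Fin N) a := by
    conv_lhs => rw [← hsym]
    rw [Matrix.transpose_apply]
  rw [haij]; ring

end Schur

lemma schur_term_mono {M : Matrix (Fin N) (Fin N) ℝ} (hM : M.PosSemidef)
    {S T : Finset (Fin N)} (hST : S ⊆ T)
    (hdS : IsUnit (msub M S).det) (hdT : IsUnit (msub M T).det) (a : Fin N) :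
    (fun i : {x // x ∈ S} => M i a) ⬝ᵥ ((msub M S)⁻¹ *ᵥ fun i : {x // x ∈ S} => M i a)
      ≤ (fun i : {x // x ∈ T} => M i a) ⬝ᵥ ((msub M T)⁻¹ *ᵥ fun i : {x // x ∈ T} => M i a) := by
  set wS : {x // x ∈ S} → ℝ := fun i => M i a with hwS
  set wT : {x // x ∈ T} → ℝ := fun i => M i a with hwT
  set v : {x // x ∈ S} → ℝ := (msub M S)⁻¹ *ᵥ wS with hv
  set x : {x // x ∈ T} → ℝ := fun t => extFun v t with hx
  have hTpsd : (msub M T).PosSemidef := hM.submatrix _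
  have key := quad_bound hTpsd hdT wT x
  have e1 : x ⬝ᵥ wT = v ⬝ᵥ wS := by
    show (∑ t : {x // x ∈ T}, extFun v t * M t a) = _
    rw [sum_ext hST v (fun b => M b a)]
    rfl
  have e2 : x ⬝ᵥ (msub M T *ᵥ x) = v ⬝ᵥ (msub M S *ᵥ v) := quad_restrict M hST v
  have e3 : msub M S *ᵥ v = wS := by
    rw [hv, Matrix.mulVec_mulVec, Matrix.mul_nonsing_inv _ hdS, Matrix.one_mulVec]
  have e4 : wS ⬝ᵥ ((msub M S)⁻¹ *ᵥ wS) = v ⬝ᵥ wS := dotProduct_comm _ _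
  rw [e1, e2, e3] at key
  rw [e4]
  linarith

lemma kotel {M : Matrix (Fin N) (Fin N) ℝ} (hM : M.PosSemidef)
    {C A : Finset (Fin N)} (hCA : C ⊆ A) {a : Fin N} (ha : a ∉ A) :
    det (msub M (insert a A)) * det (msub M C)
      ≤ det (msub M A) * det (msub M (insert a C)) := by
  have haC : a ∉ C := fun h => ha (hCA h)
  have hsym : Mᵀ = M := real_transpose_eq hM.1
  have hnn : ∀ S : Finset (Fin N), 0 ≤ det (msub M S) :=
    fun S => psd_det_nonneg (hM.submatrix _)
  by_cases hdA : det (msub M A) = 0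
  · rw [det_msub_zero_mono hM (Finset.subset_insert a A) hdA, hdA, zero_mul, zero_mul]
  by_cases hdC : det (msub M C) = 0
  · rw [hdC, mul_zero]
    exact mul_nonneg (hnn A) (hnn (insert a C))
  have hdA' : IsUnit (msub M A).det := isUnit_iff_ne_zero.mpr hdA
  have hdC' : IsUnit (msub M C).det := isUnit_iff_ne_zero.mpr hdC
  rw [det_msub_insert hsym ha hdA', det_msub_insert hsym haC hdC']
  have hq := schur_term_mono hM hCA hdC' hdA' a
  have h1 : 0 < det (msub M A) := lt_of_le_of_ne (hnn A) (Ne.symm hdA)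
  have h2 : 0 < det (msub M C) := lt_of_le_of_ne (hnn C) (Ne.symm hdC)
  nlinarith [mul_pos h1 h2]

end Aux2

section Bridge

open Finset

variable {N p : ℕ}

lemma psd_one_sub {Z : Matrix (Fin p) (Fin N) ℝ} (hZ : Z * Zᵀ = 1) :
    (1 - Zᵀ * Z).PosSemidef := by
  have htr : (1 - Zᵀ * Z)ᴴ = 1 - Zᵀ * Z := by
    have h1 : (1 - Zᵀ * Z)ᴴ = (1 - Zᵀ * Z)ᵀ := by
      ext i j
      simp [Matrix.conjTranspose_apply]
    rw [h1, Matrix.transpose_sub, Matrix.transpose_one, Matrix.transpose_mul,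
      Matrix.transpose_transpose]
  suffices hsuff : 1 - Zᵀ * Z = (1 - Zᵀ * Z)ᴴ * (1 - Zᵀ * Z) by
    rw [hsuff]; exact Matrix.posSemidef_conjTranspose_mul_self _
  rw [htr]
  have hKK : (Zᵀ * Z) * (Zᵀ * Z) = Zᵀ * Z := by
    rw [Matrix.mul_assoc, ← Matrix.mul_assoc Z Zᵀ Z, hZ, Matrix.one_mul]
  rw [Matrix.sub_mul, Matrix.mul_sub, Matrix.mul_sub, Matrix.one_mul, Matrix.mul_one, hKK]
  abel_nf
  rw [Matrix.one_mul]

open scoped Classical in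
lemma prDP_avoid (Z : Matrix (Fin p) (Fin N) ℝ) (hZ : Z * Zᵀ = 1)
    (J : Finset (Fin N)) (E : Set (Finset (Fin N)))
    (hE : ∀ S : Finset (Fin N), S ∈ E ↔ ∀ j ∈ J, j ∉ S) :
    prDP Z E = det (msub (1 - Zᵀ * Z) J) := by
  set W : Matrix (Fin p) (Fin N) ℝ :=
    Matrix.of (fun i j => if j ∈ J then 0 else Z i j) with hW
  -- step b : prDP Z E = ∑ S, detSq W S
  have stepb : prDP Z E = ∑ S : Finset (Fin N), detSq W S := by
    unfold prDP
    refine Finset.sum_congr rfl fun S _ => ?_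
    by_cases hSE : S ∈ E
    · rw [if_pos hSE]
      unfold detSq
      by_cases h : S.card = p
      · rw [dif_pos h, dif_pos h]
        congr 2
        ext i j
        have hjS : ((S.orderIsoOfFin h j : Fin N)) ∈ S := (S.orderIsoOfFin h j).2
        have hjJ : ((S.orderIsoOfFin h j : Fin N)) ∉ J := by
          intro hmem
          exact ((hE S).mp hSE _ hmem) hjS
        have hjJ' : (S.orderEmbOfFin h) j ∉ J := by
          simpa [Finset.coe_orderIsoOfFin_apply] using hjJ
        simp [hW, hjJ']
      · rw [dif_neg h, dif_neg h]
    · rw [if_neg hSE]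
      unfold detSq
      by_cases h : S.card = p
      · rw [dif_pos h]
        obtain ⟨j0, hj0J, hj0S⟩ : ∃ j0 ∈ J, j0 ∈ S := by
          by_contra hcon
          push_neg at hcon
          exact hSE ((hE S).mpr hcon)
        have : (Matrix.det (Matrix.of fun i j : Fin p => W i ((S.orderIsoOfFin h j : Fin N)))) = 0 := by
          apply Matrix.det_eq_zero_of_column_eq_zero ((S.orderIsoOfFin h).symm ⟨j0, hj0S⟩)
          intro i
          simp only [Matrix.of_apply, OrderIso.apply_symm_apply, hW, hj0J, if_true]
        rw [this]
        norm_num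
      · rw [dif_neg h]
  -- step c : ∑ S, detSq W S = det (W * Wᵀ)
  have stepc : (∑ S : Finset (Fin N), detSq W S) = det (W * Wᵀ) := by
    rw [cauchyBinet W Wᵀ]
    refine Finset.sum_congr rfl fun S _ => ?_
    unfold detSq
    by_cases h : S.card = p
    · rw [dif_pos h, dif_pos h]
      have htr : (Wᵀ.submatrix (fun j => (S.orderIsoOfFin h j : Fin N)) id)
          = (W.submatrix id (fun j => (S.orderIsoOfFin h j : Fin N)))ᵀ := rfl
      rw [htr, Matrix.det_transpose, ← sq]
      rfl
    · rw [dif_neg h, dif_neg h]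
  -- step d : W * Wᵀ = 1 - Y * Yᵀ
  set Y : Matrix (Fin p) {x // x ∈ J} ℝ :=
    Z.submatrix id (fun j => (j : Fin N)) with hY
  have stepd : W * Wᵀ = 1 - Y * Yᵀ := by
    ext i i'
    have hterm : ∀ j : Fin N, W i j * W i' j
        = Z i j * Z i' j - (if j ∈ J then Z i j * Z i' j else 0) := by
      intro j
      by_cases hj : j ∈ J <;> simp [hW, hj]
    show (∑ j : Fin N, W i j * Wᵀ j i') = _
    have : (∑ j : Fin N, W i j * Wᵀ j i') = ∑ j : Fin N, W i j * W i' j := rfl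
    rw [this]
    simp only [hterm]
    rw [Finset.sum_sub_distrib]
    have h1 : (∑ j : Fin N, Z i j * Z i' j) = (1 : Matrix (Fin p) (Fin p) ℝ) i i' := by
      rw [← hZ]
      rfl
    have h2 : (∑ j : Fin N, if j ∈ J then Z i j * Z i' j else 0)
        = (Y * Yᵀ) i i' := by
      rw [Finset.sum_ite_mem, Finset.univ_inter,
        ← Finset.sum_coe_sort J (fun j => Z i j * Z i' j)]
      rfl
    rw [h1, h2]
    rfl
  -- step e/f
  have stepf : (1 : Matrix {x // x ∈ J} {x // x ∈ J} ℝ) - Yᵀ * Y = msub (1 - Zᵀ * Z) J := by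
    ext j j'
    have h1 : (Yᵀ * Y) j j' = (Zᵀ * Z) (j : Fin N) (j' : Fin N) := rfl
    have h2 : (1 : Matrix {x // x ∈ J} {x // x ∈ J} ℝ) j j'
        = (1 : Matrix (Fin N) (Fin N) ℝ) (j : Fin N) (j' : Fin N) := by
      by_cases hjj : j = j'
      · rw [hjj]; simp
      · rw [Matrix.one_apply_ne hjj, Matrix.one_apply_ne (fun hc => hjj (Subtype.ext hc))]
    show (1 : Matrix {x // x ∈ J} {x // x ∈ J} ℝ) j j' - (Yᵀ * Y) j j' = _
    rw [h1, h2]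
    rfl
  rw [stepb, stepc, stepd, Matrix.det_one_sub_mul_comm, stepf]

end Bridge

/-- Lemma 3: for distinct points x₁,…,xₙ (n ≥ 2) and 2 ≤ k ≤ n,
P({x₁,…,xₙ} ⊆ φᶜ) · P(({x₂,…,xₙ} ∖ {x_k}) ⊆ φᶜ)
  ≤ P({x₂,…,xₙ} ⊆ φᶜ) · P(({x₁,…,xₙ} ∖ {x_k}) ⊆ φᶜ),
i.e. conditioning on more points being outside φ decreases the probability that x₁ is
outside φ.  Here index 0 plays the role of the subscript 1. -/
theorem conditional_avoid_mono {N p n : ℕ} (hp : 1 < p) (hpN : p < N)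
    (Z : Matrix (Fin p) (Fin N) ℝ) (hZ : Z * Zᵀ = 1)
    (hn : 2 ≤ n) (x : Fin n → Fin N) (hx : Function.Injective x)
    (k : Fin n) (hk : k ≠ ⟨0, by omega⟩) :
    prDP Z {S | ∀ i : Fin n, x i ∉ S}
        * prDP Z {S | ∀ i : Fin n, i ≠ ⟨0, by omega⟩ → i ≠ k → x i ∉ S}
      ≤ prDP Z {S | ∀ i : Fin n, i ≠ ⟨0, by omega⟩ → x i ∉ S}
        * prDP Z {S | ∀ i : Fin n, i ≠ k → x i ∉ S} := by
  classical
  have hn0 : 0 < n := by omega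
  set z : Fin n := ⟨0, hn0⟩ with hzdef
  set M : Matrix (Fin N) (Fin N) ℝ := 1 - Zᵀ * Z with hMdef
  have hMpsd : M.PosSemidef := psd_one_sub hZ
  set A : Finset (Fin N) := (Finset.univ.erase z).image x with hA
  set C : Finset (Fin N) := ((Finset.univ.erase z).erase k).image x with hC
  have hCA : C ⊆ A := Finset.image_subset_image (Finset.erase_subset _ _)
  have haA : x z ∉ A := by
    intro hmem
    obtain ⟨i, hi, hxi⟩ := Finset.mem_image.mp hmem
    exact (Finset.mem_erase.mp hi).1 (hx hxi)
  have hzk : z ≠ k := fun h => hk h.symm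
  have h1 : prDP Z {S | ∀ i : Fin n, x i ∉ S} = det (msub M (insert (x z) A)) := by
    apply prDP_avoid Z hZ
    intro S
    constructor
    · intro hS j hj
      rcases Finset.mem_insert.mp hj with rfl | hjA
      · exact hS z
      · obtain ⟨i, _, rfl⟩ := Finset.mem_image.mp hjA
        exact hS i
    · intro hS i
      by_cases hiz : i = z
      · exact hiz ▸ hS (x z) (Finset.mem_insert_self _ _)
      · exact hS (x i) (Finset.mem_insert_of_mem (Finset.mem_image.mpr
          ⟨i, Finset.mem_erase.mpr ⟨hiz, Finset.mem_univ i⟩, rfl⟩))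
  have h2 : prDP Z {S | ∀ i : Fin n, i ≠ z → i ≠ k → x i ∉ S} = det (msub M C) := by
    apply prDP_avoid Z hZ
    intro S
    constructor
    · intro hS j hj
      obtain ⟨i, hi, rfl⟩ := Finset.mem_image.mp hj
      obtain ⟨hik, hi'⟩ := Finset.mem_erase.mp hi
      exact hS i (Finset.mem_erase.mp hi').1 hik
    · intro hS i hiz hik
      exact hS (x i) (Finset.mem_image.mpr ⟨i, Finset.mem_erase.mpr
        ⟨hik, Finset.mem_erase.mpr ⟨hiz, Finset.mem_univ i⟩⟩, rfl⟩)
  have h3 : prDP Z {S | ∀ i : Fin n, i ≠ z → x i ∉ S} = det (msub M A) := by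
    apply prDP_avoid Z hZ
    intro S
    constructor
    · intro hS j hj
      obtain ⟨i, hi, rfl⟩ := Finset.mem_image.mp hj
      exact hS i (Finset.mem_erase.mp hi).1
    · intro hS i hiz
      exact hS (x i) (Finset.mem_image.mpr ⟨i, Finset.mem_erase.mpr
        ⟨hiz, Finset.mem_univ i⟩, rfl⟩)
  have h4 : prDP Z {S | ∀ i : Fin n, i ≠ k → x i ∉ S} = det (msub M (insert (x z) C)) := by
    apply prDP_avoid Z hZ
    intro S
    constructor
    · intro hS j hj
      rcases Finset.mem_insert.mp hj with rfl | hjC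
      · exact hS z hzk
      · obtain ⟨i, hi, rfl⟩ := Finset.mem_image.mp hjC
        exact hS i (Finset.mem_erase.mp hi).1
    · intro hS i hik
      by_cases hiz : i = z
      · exact hiz ▸ hS (x z) (Finset.mem_insert_self _ _)
      · exact hS (x i) (Finset.mem_insert_of_mem (Finset.mem_image.mpr
          ⟨i, Finset.mem_erase.mpr ⟨hik, Finset.mem_erase.mpr
            ⟨hiz, Finset.mem_univ i⟩⟩, rfl⟩))
  rw [h1, h2, h3, h4]
  exact kotel hMpsd hCA haA
end Aux
end

section
/- Let n ≥ 1 and let V be an n × n real matrix with det(V)² ≤ 1. For 1 ≤ i, j ≤ n let mᵢⱼ denote the determinant of the (n−1) × (n−1) submatrix of V obtained by deleting row i and column j. Then (n + 1)·det(V)² ≤ det(V)⁴ + Σ_{i=1}^{n} Σ_{j=1}^{n} mᵢⱼ². -/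
open Matrix

/-- AM-GM: if `m` nonnegative reals have product at least `c ^ m` (with `c ≥ 0`),
then their sum is at least `m * c`. -/
lemma amgm_aux {m : ℕ} (hm : 0 < m) (z : Fin m → ℝ) (hz : ∀ i, 0 ≤ z i)
    (c : ℝ) (hc : 0 ≤ c) (h : c ^ m ≤ ∏ i, z i) : (m : ℝ) * c ≤ ∑ i, z i := by
  have hm' : (0:ℝ) < m := by exact_mod_cast hm
  have hw : ∑ _i : Fin m, (m : ℝ)⁻¹ = 1 := by
    simp [Finset.sum_const, Finset.card_univ]
    field_simp
  have hgm := Real.geom_mean_le_arith_mean_weighted Finset.univ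
      (fun _ => (m : ℝ)⁻¹) z (fun _ _ => by positivity) hw (fun i _ => hz i)
  have hprod : (∏ i, z i ^ ((m : ℝ)⁻¹ : ℝ)) = (∏ i, z i) ^ ((m : ℝ)⁻¹ : ℝ) := by
    rw [← Real.finset_prod_rpow _ _ (fun i _ => hz i)]
  have hcle : c ≤ (∏ i, z i) ^ ((m : ℝ)⁻¹ : ℝ) := by
    have h1 : (c ^ m) ^ ((m : ℝ)⁻¹ : ℝ) ≤ (∏ i, z i) ^ ((m : ℝ)⁻¹ : ℝ) :=
      Real.rpow_le_rpow (by positivity) h (by positivity)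
    calc c = (c ^ m) ^ ((m : ℝ)⁻¹ : ℝ) := by
              rw [← Real.rpow_natCast c m, ← Real.rpow_mul hc]
              rw [mul_inv_cancel₀ (ne_of_gt hm'), Real.rpow_one]
      _ ≤ _ := h1
  have hsum : ∑ i, (m : ℝ)⁻¹ * z i = (m : ℝ)⁻¹ * ∑ i, z i := by
    rw [Finset.mul_sum]
  have : c ≤ (m : ℝ)⁻¹ * ∑ i, z i := by
    calc c ≤ (∏ i, z i) ^ ((m : ℝ)⁻¹ : ℝ) := hcle
      _ = ∏ i, z i ^ ((m : ℝ)⁻¹ : ℝ) := hprod.symm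
      _ ≤ ∑ i, (m : ℝ)⁻¹ * z i := hgm
      _ = _ := hsum
  calc (m : ℝ) * c ≤ (m : ℝ) * ((m : ℝ)⁻¹ * ∑ i, z i) := by
        exact mul_le_mul_of_nonneg_left this (le_of_lt hm')
    _ = ∑ i, z i := by field_simp

/-- Trace of a real symmetric matrix is the sum of its eigenvalues. -/
lemma trace_eq_sum_eigenvalues_aux {m : Type*} [Fintype m] [DecidableEq m]
    {A : Matrix m m ℝ} (hA : A.IsHermitian) :
    A.trace = ∑ i, hA.eigenvalues i := by
  nth_rw 1 [hA.spectral_theorem]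
  rw [Unitary.conjStarAlgAut_apply, trace_mul_cycle]
  rw [show (star (hA.eigenvectorUnitary : Matrix m m ℝ)) *
        (hA.eigenvectorUnitary : Matrix m m ℝ) = 1 from
      Unitary.coe_star_mul_self _, one_mul, trace_diagonal]
  simp

/-- for an (n+1) × (n+1) real matrix V (so with n+1 ≥ 1 rows) with det(V)² ≤ 1,
(n + 2) · det(V)² ≤ det(V)⁴ + Σᵢ Σⱼ mᵢⱼ², where mᵢⱼ is the minor of V obtained by deleting
row i and column j.  (The size of the matrix is written as n + 1 so that the statement
covers exactly the sizes ≥ 1; the constant n + 2 is "size + 1".) -/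
theorem det_sq_le_det_pow_four_add_minors (n : ℕ)
    (V : Matrix (Fin (n + 1)) (Fin (n + 1)) ℝ) (hV : V.det ^ 2 ≤ 1) :
    ((n : ℝ) + 1 + 1) * V.det ^ 2
      ≤ V.det ^ 4 + ∑ i : Fin (n + 1), ∑ j : Fin (n + 1),
          ((V.submatrix i.succAbove j.succAbove).det) ^ 2 := by
  set d : ℝ := V.det with hd
  set A : Matrix (Fin (n+1)) (Fin (n+1)) ℝ := adjugate V with hA
  have hPSD : (A * Aᴴ).PosSemidef := posSemidef_self_mul_conjTranspose A
  have hHerm : (A * Aᴴ).IsHermitian := hPSD.isHermitian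
  set lam : Fin (n+1) → ℝ := hHerm.eigenvalues with hlam
  have hlam_nonneg : ∀ i, 0 ≤ lam i := fun i => hPSD.eigenvalues_nonneg i
  -- product of eigenvalues
  have hdetA : A.det = d ^ n := by
    rw [hA, det_adjugate]
    simp
    rfl
  have hprod : ∏ i, lam i = d ^ (2 * n) := by
    have h1 : (A * Aᴴ).det = ∏ i, (lam i : ℝ) := hHerm.det_eq_prod_eigenvalues
    rw [← h1, det_mul, det_conjTranspose]
    simp [hdetA, pow_mul]
    ring
  -- trace = sum of eigenvalues
  have htrace : ∑ i, lam i = ∑ i : Fin (n+1), ∑ j : Fin (n+1), (A i j) ^ 2 := by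
    rw [← trace_eq_sum_eigenvalues_aux hHerm, trace]
    congr 1
    ext i
    simp [Matrix.mul_apply, diag, conjTranspose_apply, sq]
  -- minors squared equal adjugate entries squared
  have hmin : ∀ i j : Fin (n+1),
      ((V.submatrix i.succAbove j.succAbove).det) ^ 2 = (A j i) ^ 2 := by
    intro i j
    rw [hA, adjugate_fin_succ_eq_det_submatrix, mul_pow, ← pow_mul]
    have hev : Even (((i : ℕ) + j) * 2) := even_two.mul_left _
    rw [hev.neg_one_pow, one_mul]
  have hsum : ∑ i : Fin (n+1), ∑ j : Fin (n+1),
      ((V.submatrix i.succAbove j.succAbove).det) ^ 2 = ∑ i, lam i := by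
    rw [htrace]
    rw [Finset.sum_comm]
    congr 1; ext j; congr 1; ext i
    exact hmin i j
  rw [hsum]
  -- apply AM-GM to the n+2 numbers d^4, lam 0, ..., lam n
  have := amgm_aux (m := n + 2) (Nat.succ_pos _) (Fin.cons (d ^ 4) lam)
      (fun i => by
        refine Fin.cases ?_ ?_ i
        · simp [Fin.cons_zero]; positivity
        · intro k; simpa using hlam_nonneg k)
      (d ^ 2) (sq_nonneg d)
      (by
        rw [Fin.prod_cons, hprod, ← pow_mul, ← pow_add]
        ring_nf
        exact le_refl _)
  rw [Fin.sum_cons] at this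
  have hcast : ((n : ℝ) + 1 + 1) = ((n + 2 : ℕ) : ℝ) := by push_cast; ring
  rw [hcast]
  exact this
end

section
/- Let n ≥ 1 and let V be an n × n real matrix. For 1 ≤ i, j ≤ n let mᵢⱼ denote the determinant of the (n−1) × (n−1) submatrix of V obtained by deleting row i and column j. Then |det(V)|^{n−1} ≤ ∏_{i=1}^{n} (Σ_{j=1}^{n} mᵢⱼ²)^{1/2}. -/
open Matrix Finset

/-- Trace of a real symmetric matrix equals the sum of eigenvalues. -/
lemma aux_trace_eq_sum_eigenvalues {m : ℕ} {A : Matrix (Fin m) (Fin m) ℝ}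
    (hA : A.IsHermitian) : A.trace = ∑ i, hA.eigenvalues i := by
  have h : (star (hA.eigenvectorUnitary : Matrix (Fin m) (Fin m) ℝ)) * A *
      (hA.eigenvectorUnitary : Matrix (Fin m) (Fin m) ℝ)
      = Matrix.diagonal (RCLike.ofReal ∘ hA.eigenvalues) := by
    simpa using hA.conjStarAlgAut_star_eigenvectorUnitary
  have h2 : ((star (hA.eigenvectorUnitary : Matrix (Fin m) (Fin m) ℝ)) * A *
      (hA.eigenvectorUnitary : Matrix (Fin m) (Fin m) ℝ)).trace
      = (Matrix.diagonal (RCLike.ofReal ∘ hA.eigenvalues)).trace := by rw [h]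
  rw [Matrix.trace_mul_comm, ← Matrix.mul_assoc,
    (Matrix.mem_unitaryGroup_iff).mp (hA.eigenvectorUnitary).2, Matrix.one_mul] at h2
  rw [h2, Matrix.trace_diagonal]
  simp [RCLike.ofReal]

/-- A real PSD matrix with unit diagonal has determinant at most 1. -/
lemma aux_det_le_one_of_unit_diag {m : ℕ} {G : Matrix (Fin m) (Fin m) ℝ}
    (hG : G.PosSemidef) (hd : ∀ i, G i i = 1) : G.det ≤ 1 := by
  rcases Nat.eq_zero_or_pos m with hm | hm
  · subst hm; simp [Matrix.det_fin_zero]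
  have hherm := hG.1
  have hev : ∀ i, 0 ≤ hherm.eigenvalues i := hG.eigenvalues_nonneg
  have htr : ∑ i, hherm.eigenvalues i = m := by
    rw [← aux_trace_eq_sum_eigenvalues hherm, Matrix.trace]
    simp [Matrix.diag, hd]
  have hdet : G.det = ∏ i, hherm.eigenvalues i := by
    have := hherm.det_eq_prod_eigenvalues
    simpa using this
  have hmne : (m : ℝ) ≠ 0 := Nat.cast_ne_zero.mpr hm.ne'
  have hAMGM := Real.geom_mean_le_arith_mean_weighted Finset.univ
    (fun _ : Fin m => (m : ℝ)⁻¹) hherm.eigenvalues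
    (fun i _ => by positivity) (by simp [hmne]) (fun i _ => hev i)
  have hrhs : ∑ i : Fin m, (m : ℝ)⁻¹ * hherm.eigenvalues i = 1 := by
    rw [← Finset.mul_sum, htr, inv_mul_cancel₀ hmne]
  rw [hrhs] at hAMGM
  have hpow : (∏ i : Fin m, hherm.eigenvalues i ^ ((m : ℝ)⁻¹)) ^ (m : ℕ)
      = ∏ i, hherm.eigenvalues i := by
    rw [← Finset.prod_pow]
    refine Finset.prod_congr rfl fun i _ => ?_
    rw [← Real.rpow_natCast (hherm.eigenvalues i ^ ((m : ℝ)⁻¹)) m,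
      ← Real.rpow_mul (hev i), inv_mul_cancel₀ hmne, Real.rpow_one]
  calc G.det = (∏ i : Fin m, hherm.eigenvalues i ^ ((m : ℝ)⁻¹)) ^ (m : ℕ) := by
        rw [hpow, hdet]
    _ ≤ 1 ^ (m : ℕ) := by
        apply pow_le_pow_left₀ _ hAMGM
        exact Finset.prod_nonneg fun i _ => Real.rpow_nonneg (hev i) _
    _ = 1 := one_pow m

/-- A real PSD matrix's determinant is at most the product of its diagonal. -/
lemma aux_psd_det_le_prod_diag {m : ℕ} {G : Matrix (Fin m) (Fin m) ℝ}
    (hG : G.PosSemidef) (hd : ∀ i, 0 < G i i) : G.det ≤ ∏ i, G i i := by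
  set d : Fin m → ℝ := fun i => (Real.sqrt (G i i))⁻¹ with hdd
  have hds : ∀ i, 0 < d i := fun i => inv_pos.mpr (Real.sqrt_pos.mpr (hd i))
  have hsq : ∀ i, d i * d i = (G i i)⁻¹ := by
    intro i
    rw [hdd]
    rw [← mul_inv]
    rw [Real.mul_self_sqrt (hd i).le]
  set D := Matrix.diagonal d with hD
  have hDH : Dᴴ = D := by
    rw [Matrix.conjTranspose_eq_transpose_of_trivial, hD, Matrix.diagonal_transpose]
  have hH : (D * G * D).PosSemidef := by
    have := hG.mul_mul_conjTranspose_same D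
    rwa [hDH] at this
  have hHd : ∀ i, (D * G * D) i i = 1 := by
    intro i
    rw [hD, Matrix.mul_diagonal, Matrix.diagonal_mul]
    rw [mul_comm (d i * G i i) (d i), ← mul_assoc, hsq i,
      inv_mul_cancel₀ (hd i).ne']
  have h1 : (D * G * D).det ≤ 1 := aux_det_le_one_of_unit_diag hH hHd
  have hdet : (D * G * D).det = (∏ i, d i)^2 * G.det := by
    rw [Matrix.det_mul, Matrix.det_mul, hD, Matrix.det_diagonal]
    ring
  rw [hdet] at h1
  have hprod : (∏ i, d i)^2 = (∏ i, G i i)⁻¹ := by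
    rw [← Finset.prod_inv_distrib, sq, ← Finset.prod_mul_distrib]
    exact Finset.prod_congr rfl fun i _ => hsq i
  rw [hprod] at h1
  have hP : 0 < ∏ i, G i i := Finset.prod_pos fun i _ => hd i
  calc G.det = (∏ i, G i i) * ((∏ i, G i i)⁻¹ * G.det) := by
        field_simp
    _ ≤ (∏ i, G i i) * 1 := by
        exact mul_le_mul_of_nonneg_left h1 hP.le
    _ = ∏ i, G i i := mul_one _

/-- Hadamard's inequality for real matrices, row-norm version. -/
lemma aux_hadamard {m : ℕ} (A : Matrix (Fin m) (Fin m) ℝ) :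
    |A.det| ≤ ∏ i, Real.sqrt (∑ j, A i j ^ 2) := by
  by_cases h : ∀ i, 0 < ∑ j, A i j ^ 2
  · set G := A * Aᵀ with hG
    have hpsd : G.PosSemidef := by
      have := Matrix.posSemidef_self_mul_conjTranspose A
      rwa [Matrix.conjTranspose_eq_transpose_of_trivial] at this
    have hGd : ∀ i, G i i = ∑ j, A i j ^ 2 := by
      intro i
      rw [hG, Matrix.mul_apply]
      exact Finset.sum_congr rfl fun j _ => by rw [Matrix.transpose_apply, sq]
    have hdetG : G.det = A.det ^ 2 := by
      rw [hG, Matrix.det_mul, Matrix.det_transpose, sq]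
    have h1 : A.det ^ 2 ≤ ∏ i, ∑ j, A i j ^ 2 := by
      rw [← hdetG]
      calc G.det ≤ ∏ i, G i i := aux_psd_det_le_prod_diag hpsd (fun i => (hGd i) ▸ h i)
        _ = ∏ i, ∑ j, A i j ^ 2 := Finset.prod_congr rfl fun i _ => hGd i
    have hP : (0:ℝ) ≤ ∏ i, Real.sqrt (∑ j, A i j ^ 2) :=
      Finset.prod_nonneg fun i _ => Real.sqrt_nonneg _
    have hP2 : (∏ i, Real.sqrt (∑ j, A i j ^ 2)) ^ 2 = ∏ i, ∑ j, A i j ^ 2 := by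
      rw [← Finset.prod_pow]
      exact Finset.prod_congr rfl fun i _ => Real.sq_sqrt (h i).le
    have := Real.sqrt_le_sqrt (hP2 ▸ h1)
    rwa [Real.sqrt_sq_eq_abs, Real.sqrt_sq hP] at this
  · push_neg at h
    obtain ⟨i, hi⟩ := h
    have hz : ∀ j, A i j = 0 := by
      intro j
      have hle : A i j ^ 2 ≤ ∑ j, A i j ^ 2 :=
        Finset.single_le_sum (fun j _ => sq_nonneg (A i j)) (Finset.mem_univ j)
      have : A i j ^ 2 = 0 := le_antisymm (hle.trans hi) (sq_nonneg _)
      exact pow_eq_zero_iff (two_ne_zero) |>.mp this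
    have : A.det = 0 := Matrix.det_eq_zero_of_row_eq_zero i hz
    rw [this, abs_zero]
    exact Finset.prod_nonneg fun i _ => Real.sqrt_nonneg _


/-- for an (n+1) × (n+1) real matrix V,
|det(V)|^((n+1)−1) ≤ ∏ᵢ (Σⱼ mᵢⱼ²)^(1/2), where mᵢⱼ is the minor of V obtained by deleting
row i and column j; the i-th factor is the Euclidean norm of the wedge product of the rows
of V other than row i. -/
theorem abs_det_pow_le_prod_minor_norms (n : ℕ)
    (V : Matrix (Fin (n + 1)) (Fin (n + 1)) ℝ) :
    |V.det| ^ n ≤ ∏ i : Fin (n + 1),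
      Real.sqrt (∑ j : Fin (n + 1), ((V.submatrix i.succAbove j.succAbove).det) ^ 2) := by
  set C := (Matrix.adjugate V)ᵀ with hC
  have hentry : ∀ i j, C i j = (-1 : ℝ) ^ (i + j : ℕ) *
      (V.submatrix i.succAbove j.succAbove).det := by
    intro i j
    rw [hC, Matrix.transpose_apply, Matrix.adjugate_fin_succ_eq_det_submatrix]
  have hdetC : |C.det| = |V.det| ^ n := by
    rw [hC, Matrix.det_transpose, Matrix.det_adjugate, Fintype.card_fin, abs_pow]
    simp
  have hsq : ∀ i j, C i j ^ 2 = (V.submatrix i.succAbove j.succAbove).det ^ 2 := by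
    intro i j
    rw [hentry i j, mul_pow, ← pow_mul, mul_comm ((i:ℕ) + j) 2, pow_mul, neg_one_sq,
      one_pow, one_mul]
  have h := aux_hadamard C
  rw [hdetC] at h
  calc |V.det| ^ n ≤ ∏ i, Real.sqrt (∑ j, C i j ^ 2) := h
    _ = ∏ i : Fin (n + 1), Real.sqrt (∑ j : Fin (n + 1),
        ((V.submatrix i.succAbove j.succAbove).det) ^ 2) := by
      refine Finset.prod_congr rfl fun i _ => ?_
      congr 1
      exact Finset.sum_congr rfl fun j _ => hsq i j
end

section
/- Let J ⊆ {1,…,N} with |J| = n, 1 ≤ n ≤ p, n < N − p, and suppose P(J ⊆ φᶜ) > 0. Then the conditional process (φ | J ⊆ φᶜ) is determinantal: there exists a p × N real matrix U with orthonormal rows, each row having all coordinates indexed by J equal to zero, such that for every K ⊆ {1,…,N} ∖ J, Σ_{|S| = p, K ⊆ S, S ∩ J = ∅} det(Z_S)² = (Σ_{|S| = p, S ∩ J = ∅} det(Z_S)²) · (Σ_{|T| = p, K ⊆ T} det(U_T)²); that is, P(K ⊆ φ | J ⊆ φᶜ) = P(K ⊆ φ(U)) for the determinantal process φ(U). -/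
open Matrix

open Finset Equiv in
/-- Cauchy–Binet formula. -/
theorem cauchyBinetAux {p N : ℕ} (A : Matrix (Fin p) (Fin N) ℝ) (B : Matrix (Fin N) (Fin p) ℝ) :
    det (A * B) = ∑ S : Finset (Fin N), if h : S.card = p then
      det (A.submatrix id fun j => (S.orderIsoOfFin h j : Fin N)) *
      det (B.submatrix (fun i => (S.orderIsoOfFin h i : Fin N)) id) else 0 := by
  classical
  calc det (A * B)
      = ∑ σ : Perm (Fin p), ∑ f : Fin p → Fin N,
          (Equiv.Perm.sign σ : ℝ) * ∏ i, A (σ i) (f i) * B (f i) i := by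
        rw [det_apply']
        refine Finset.sum_congr rfl fun σ _ => ?_
        rw [← Finset.mul_sum]
        congr 1
        simp only [Matrix.mul_apply, Finset.prod_univ_sum, Fintype.piFinset_univ]
    _ = ∑ f : Fin p → Fin N, ∑ σ : Perm (Fin p),
          (Equiv.Perm.sign σ : ℝ) * ∏ i, A (σ i) (f i) * B (f i) i := Finset.sum_comm
    _ = ∑ f : Fin p → Fin N, (∏ i, B (f i) i) * det (A.submatrix id f) := by
        refine Finset.sum_congr rfl fun f _ => ?_
        rw [det_apply', Finset.mul_sum]
        refine Finset.sum_congr rfl fun σ _ => ?_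
        simp only [submatrix_apply, id_eq, prod_mul_distrib]
        ring
    _ = ∑ f ∈ Finset.univ.filter (fun f : Fin p → Fin N => Function.Injective f),
          (∏ i, B (f i) i) * det (A.submatrix id f) := by
        refine (Finset.sum_subset (Finset.filter_subset _ _) fun f _ hf => ?_).symm
        simp only [Finset.mem_filter, Finset.mem_univ, true_and] at hf
        obtain ⟨i, j, hij, hne⟩ : ∃ i j, f i = f j ∧ i ≠ j := by
          rw [Function.Injective] at hf; push_neg at hf
          obtain ⟨i, j, h1, h2⟩ := hf; exact ⟨i, j, h1, h2⟩
        have : det (A.submatrix id f) = 0 := by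
          rw [← det_transpose]
          exact det_zero_of_row_eq hne (by ext k; simp [hij])
        rw [this, mul_zero]
    _ = ∑ S : Finset (Fin N), ∑ f ∈ (Finset.univ.filter
          (fun f : Fin p → Fin N => Function.Injective f)).filter
          (fun f => Finset.image f Finset.univ = S),
          (∏ i, B (f i) i) * det (A.submatrix id f) := by
        rw [← Finset.sum_fiberwise_of_maps_to
          (g := fun f : Fin p → Fin N => Finset.image f Finset.univ)
          (fun f _ => Finset.mem_univ _)]
    _ = _ := by
        refine Finset.sum_congr rfl fun S _ => ?_
        by_cases h : S.card = p
        · rw [dif_pos h]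
          set g : Fin p → Fin N := fun j => (S.orderIsoOfFin h j : Fin N) with hg
          have hginj : Function.Injective g := fun a b hab => by
            have := (S.orderIsoOfFin h).injective (Subtype.val_injective hab)
            exact this
          have hgimg : Finset.image g Finset.univ = S := by
            apply Finset.eq_of_subset_of_card_le
            · intro x hx
              simp only [Finset.mem_image] at hx
              obtain ⟨j, _, rfl⟩ := hx
              exact (S.orderIsoOfFin h j).2
            · rw [h, Finset.card_image_of_injective _ hginj, Finset.card_univ, Fintype.card_fin]
          rw [show det (A.submatrix id g) * det (B.submatrix g id)
              = ∑ π : Perm (Fin p), (∏ i, B (g (π i)) i) * det (A.submatrix id (g ∘ π)) by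
            have hsub : ∀ π : Perm (Fin p), A.submatrix id (g ∘ π)
                = (A.submatrix id g).submatrix id π := fun π => rfl
            calc det (A.submatrix id g) * det (B.submatrix g id)
                = det (A.submatrix id g) * ∑ π : Perm (Fin p),
                    (Equiv.Perm.sign π : ℝ) * ∏ i, B (g (π i)) i := by
                  congr 1
                  rw [det_apply']
                  simp only [submatrix_apply, id_eq]
              _ = ∑ π : Perm (Fin p), (∏ i, B (g (π i)) i) *
                    det (A.submatrix id (g ∘ π)) := by
                  rw [Finset.mul_sum]
                  refine Finset.sum_congr rfl fun π _ => ?_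
                  rw [hsub, det_permute']
                  ring]
          refine (Finset.sum_bij (fun (π : Perm (Fin p)) _ => g ∘ π) ?_ ?_ ?_ ?_).symm
          · intro π _
            simp only [Finset.mem_filter, Finset.mem_univ, true_and]
            constructor
            · exact hginj.comp π.injective
            · rw [← hgimg]
              ext x; simp only [Finset.mem_image, Function.comp_apply, Finset.mem_univ, true_and]
              constructor
              · rintro ⟨i, rfl⟩; exact ⟨π i, rfl⟩
              · rintro ⟨i, rfl⟩; exact ⟨π.symm i, by simp⟩
          · intro π1 _ π2 _ hπ
            exact Equiv.ext fun i => hginj (congrFun hπ i)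
          · intro f hf
            simp only [Finset.mem_filter, Finset.mem_univ, true_and] at hf
            obtain ⟨hfinj, hfimg⟩ := hf
            have hmem : ∀ i, f i ∈ S := fun i => by
              rw [← hfimg]; exact Finset.mem_image_of_mem f (Finset.mem_univ i)
            let e : Fin p → Fin p := fun i => (S.orderIsoOfFin h).symm ⟨f i, hmem i⟩
            have he : Function.Injective e := fun a b hab => by
              apply hfinj
              have := (S.orderIsoOfFin h).symm.injective hab
              exact congrArg Subtype.val this
            refine ⟨Equiv.ofBijective e (Finite.injective_iff_bijective.mp he),
              Finset.mem_univ _, ?_⟩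
            funext i
            show g (e i) = f i
            simp only [g, e, OrderIso.apply_symm_apply]
          · intro π _; rfl
        · rw [dif_neg h]
          rw [Finset.sum_eq_zero]
          intro f hf
          simp only [Finset.mem_filter, Finset.mem_univ, true_and] at hf
          exact absurd (by rw [← hf.2, Finset.card_image_of_injective _ hf.1,
            Finset.card_univ, Fintype.card_fin]) h

/-- Proposition 1, (4): if |J| = n ≤ p, n < N − p and P(J ⊆ φᶜ) > 0, then the
conditional process (φ | J ⊆ φᶜ) is determinantal, associated to a p × N matrix U with
orthonormal rows all supported outside J. -/
theorem conditional_avoid_determinantal {N p n : ℕ} (hp : 1 < p) (hpN : p < N)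
    (Z : Matrix (Fin p) (Fin N) ℝ) (hZ : Z * Zᵀ = 1)
    (J : Finset (Fin N)) (hJcard : J.card = n) (hn1 : 1 ≤ n) (hnp : n ≤ p)
    (hnNp : n < N - p)
    (hpos : 0 < prDP Z {S | Disjoint S J}) :
    ∃ U : Matrix (Fin p) (Fin N) ℝ, U * Uᵀ = 1 ∧
      (∀ i, ∀ j ∈ J, U i j = 0) ∧
      ∀ K : Finset (Fin N), Disjoint K J →
        prDP Z {S | K ⊆ S ∧ Disjoint S J}
          = prDP Z {S | Disjoint S J} * prDP U {T | K ⊆ T} := by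
  classical
  set M := Z * Matrix.diagonal (fun j => if j ∈ J then (0:ℝ) else 1) with hM
  have hMapp : ∀ i j, M i j = Z i j * (if j ∈ J then (0:ℝ) else 1) := by
    intro i j; rw [hM, Matrix.mul_diagonal]
  -- detSq of the masked matrix
  have hMdetSq : ∀ S : Finset (Fin N),
      detSq M S = if Disjoint S J then detSq Z S else 0 := by
    intro S
    unfold detSq
    by_cases h : S.card = p
    · rw [dif_pos h, dif_pos h]
      by_cases hd : Disjoint S J
      · rw [if_pos hd]
        congr 2
        ext i j
        have : ((S.orderIsoOfFin h j : Fin N)) ∉ J :=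
          Finset.disjoint_left.mp hd (S.orderIsoOfFin h j).2
        simp only [hMapp, Matrix.of_apply]
        rw [if_neg this, mul_one]
      · rw [if_neg hd]
        obtain ⟨x, hxS, hxJ⟩ := Finset.not_disjoint_iff.mp hd
        obtain ⟨j0, hj0⟩ : ∃ j0, (S.orderIsoOfFin h j0 : Fin N) = x :=
          ⟨(S.orderIsoOfFin h).symm ⟨x, hxS⟩, by simp⟩
        have : Matrix.det (Matrix.of fun i j : Fin p => M i ((S.orderIsoOfFin h j : Fin N))) = 0 := by
          apply Matrix.det_eq_zero_of_column_eq_zero j0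
          intro i
          rw [← hj0] at hxJ
          simp only [hMapp, Matrix.of_apply]
          rw [if_pos hxJ, mul_zero]
        rw [this]
        ring
    · rw [dif_neg h, dif_neg h]
      simp
  set G := M * Mᵀ with hG
  -- det G = P(J ⊆ φᶜ)
  have hdetG : det G = prDP Z {S | Disjoint S J} := by
    rw [hG, cauchyBinetAux]
    unfold prDP
    refine Finset.sum_congr rfl fun S _ => ?_
    rw [show (S ∈ {S : Finset (Fin N) | Disjoint S J}) = Disjoint S J from rfl]
    have : (if h : S.card = p then
        det (M.submatrix id fun j => (S.orderIsoOfFin h j : Fin N)) *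
        det (Mᵀ.submatrix (fun i => (S.orderIsoOfFin h i : Fin N)) id) else 0) = detSq M S := by
      unfold detSq
      by_cases h : S.card = p
      · rw [dif_pos h, dif_pos h]
        have ht : Mᵀ.submatrix (fun i => (S.orderIsoOfFin h i : Fin N)) id
            = (M.submatrix id fun j => (S.orderIsoOfFin h j : Fin N))ᵀ := rfl
        rw [ht, det_transpose, ← pow_two]
        rfl
      · rw [dif_neg h, dif_neg h]
    rw [this, hMdetSq]
    split_ifs with h1 <;> simp
  have hdetGpos : 0 < det G := hdetG ▸ hpos
  have hdetGne : det G ≠ 0 := ne_of_gt hdetGpos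
  -- square root of G
  have hGpsd : G.PosSemidef := by
    have := Matrix.posSemidef_self_mul_conjTranspose M
    rwa [Matrix.conjTranspose_eq_transpose_of_trivial] at this
  obtain ⟨s, hss, hsT⟩ : ∃ s : Matrix (Fin p) (Fin p) ℝ, s * s = G ∧ sᵀ = s := by
    open scoped MatrixOrder in
    refine ⟨CFC.sqrt G, CFC.sqrt_mul_sqrt_self G hGpsd.nonneg, ?_⟩
    open scoped MatrixOrder in
    have := (CFC.sqrt_nonneg G).posSemidef.isHermitian
    rwa [Matrix.IsHermitian, Matrix.conjTranspose_eq_transpose_of_trivial] at this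
  have hdets : det s * det s = det G := by rw [← det_mul, hss]
  have hdetsne : det s ≠ 0 := by
    intro h0; rw [h0, mul_zero] at hdets; exact hdetGne hdets.symm
  set U := s⁻¹ * M with hU
  refine ⟨U, ?_, ?_, ?_⟩
  · -- U * Uᵀ = 1
    rw [hU, Matrix.transpose_mul, Matrix.transpose_nonsing_inv, hsT]
    calc s⁻¹ * M * (Mᵀ * s⁻¹) = s⁻¹ * (s * s) * s⁻¹ := by
          rw [hss, hG]; simp only [Matrix.mul_assoc]
      _ = (s⁻¹ * s) * (s * s⁻¹) := by noncomm_ring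
      _ = 1 := by
          rw [Matrix.nonsing_inv_mul s (isUnit_iff_ne_zero.mpr hdetsne), Matrix.mul_nonsing_inv s (isUnit_iff_ne_zero.mpr hdetsne), one_mul]
  · -- support outside J
    intro i j hj
    rw [hU, Matrix.mul_apply]
    apply Finset.sum_eq_zero
    intro k _
    rw [hMapp, if_pos hj, mul_zero, mul_zero]
  · -- the conditional formula
    intro K hK
    have hUdetSq : ∀ T : Finset (Fin N), detSq U T = (det G)⁻¹ * detSq M T := by
      intro T
      unfold detSq
      by_cases h : T.card = p
      · rw [dif_pos h, dif_pos h]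
        have hfac : (Matrix.of fun i j : Fin p => U i ((T.orderIsoOfFin h j : Fin N)))
            = s⁻¹ * (Matrix.of fun i j : Fin p => M i ((T.orderIsoOfFin h j : Fin N))) := by
          ext i j
          rw [hU]
          simp only [Matrix.of_apply, Matrix.mul_apply]
        rw [hfac, det_mul, Matrix.det_nonsing_inv, Ring.inverse_eq_inv, mul_pow]
        congr 1
        rw [← hdets, mul_inv]
        ring
      · rw [dif_neg h, dif_neg h, mul_zero]
    have hPU : prDP U {T | K ⊆ T} = (det G)⁻¹ * prDP Z {S | K ⊆ S ∧ Disjoint S J} := by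
      unfold prDP
      rw [Finset.mul_sum]
      refine Finset.sum_congr rfl fun T _ => ?_
      rw [show (T ∈ {T : Finset (Fin N) | K ⊆ T}) = (K ⊆ T) from rfl,
        show (T ∈ {S : Finset (Fin N) | K ⊆ S ∧ Disjoint S J}) = (K ⊆ T ∧ Disjoint T J) from rfl]
      by_cases h1 : K ⊆ T
      · rw [if_pos h1, hUdetSq, hMdetSq]
        by_cases h2 : Disjoint T J
        · rw [if_pos h2, if_pos (show K ⊆ T ∧ Disjoint T J from ⟨h1, h2⟩)]
        · rw [if_neg h2, if_neg (show ¬(K ⊆ T ∧ Disjoint T J) from fun hc => h2 hc.2),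
            mul_zero]
      · rw [if_neg h1, if_neg (show ¬(K ⊆ T ∧ Disjoint T J) from fun hc => h1 hc.1), mul_zero]
    rw [hPU, ← hdetG, ← mul_assoc, mul_inv_cancel₀ hdetGne, one_mul]
end

section
/- Let J and K be disjoint nonempty subsets of {1,…,N}. Then P(J ∪ K ⊆ φ) ≤ P(J ⊆ φ) · P(K ⊆ φ); that is, Σ_{|S| = p, J ∪ K ⊆ S} det(Z_S)² ≤ (Σ_{|S| = p, J ⊆ S} det(Z_S)²) · (Σ_{|S| = p, K ⊆ S} det(Z_S)²). -/
open Matrix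

variable {ι : Type*} [Fintype ι] [DecidableEq ι]

/-- principal minor -/
noncomputable def pminor (M : Matrix ι ι ℝ) (T : Finset ι) : ℝ :=
  (M.submatrix (Subtype.val : {x // x ∈ T} → ι) Subtype.val).det

lemma det_piecewise (M : Matrix ι ι ℝ) (T : Finset ι) :
    (Matrix.of (T.piecewise (M : ι → ι → ℝ) (1 : Matrix ι ι ℝ))).det = pminor M T := by
  classical
  let e : {x // x ∈ T} ⊕ {x // x ∉ T} ≃ ι := Equiv.sumCompl (· ∈ T)
  rw [← Matrix.det_submatrix_equiv_self e]
  have : (Matrix.of (T.piecewise (M : ι → ι → ℝ) (1 : Matrix ι ι ℝ))).submatrix e e =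
      Matrix.fromBlocks (M.submatrix Subtype.val Subtype.val)
        (M.submatrix Subtype.val Subtype.val) 0 1 := by
    ext i j
    cases i with
    | inl a =>
      cases j with
      | inl b => simp [Finset.piecewise, a.2, e, Equiv.sumCompl]
      | inr b => simp [Finset.piecewise, a.2, e, Equiv.sumCompl]
    | inr a =>
      cases j with
      | inl b =>
        have hab : (a : ι) ≠ (b : ι) := fun h => a.2 (h ▸ b.2)
        simp [Finset.piecewise, a.2, e, Equiv.sumCompl, Matrix.one_apply, hab]
      | inr b =>
        simp [Finset.piecewise, a.2, e, Equiv.sumCompl, Matrix.one_apply,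
          Subtype.ext_iff, eq_comm]
  rw [this, Matrix.det_fromBlocks_zero₂₁, Matrix.det_one, mul_one]
  rfl

lemma det_one_add_eq_sum_pminor (M : Matrix ι ι ℝ) :
    (1 + M).det = ∑ T : Finset ι, pminor M T := by
  classical
  calc (1 + M).det
      = (Matrix.detRowAlternating (R := ℝ) (n := ι)).toMultilinearMap
          ((M : ι → ι → ℝ) + (1 : Matrix ι ι ℝ)) := by rw [add_comm]; rfl
    _ = ∑ T : Finset ι, (Matrix.detRowAlternating (R := ℝ) (n := ι)).toMultilinearMap
          (T.piecewise (M : ι → ι → ℝ) (1 : Matrix ι ι ℝ)) :=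
        MultilinearMap.map_add_univ _ _ _
    _ = ∑ T : Finset ι, pminor M T :=
        Finset.sum_congr rfl fun T _ => det_piecewise M T

lemma conjT_eq_transpose {m n : Type*} (A : Matrix m n ℝ) : Aᴴ = Aᵀ := by
  ext i j; simp [Matrix.conjTranspose_apply]

open scoped MatrixOrder in
lemma psd_eq_ct_mul_self {n : Type*} [Fintype n] [DecidableEq n] {M : Matrix n n ℝ}
    (h : M.PosSemidef) : ∃ B : Matrix n n ℝ, M = Bᴴ * B :=
  ⟨CFC.sqrt M, by rw [(CFC.sqrt_nonneg M).posSemidef.1.eq, CFC.sqrt_mul_sqrt_self M h.nonneg]⟩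

lemma pminor_nonneg {M : Matrix ι ι ℝ} (hM : M.PosSemidef) (T : Finset ι) :
    0 ≤ pminor M T := by
  have h : (M.submatrix (Subtype.val : {x // x ∈ T} → ι) Subtype.val).PosSemidef :=
    hM.submatrix _
  obtain ⟨B, hB⟩ := psd_eq_ct_mul_self h
  have : pminor M T = B.det ^ 2 := by
    rw [pminor, hB, Matrix.det_mul, Matrix.det_conjTranspose, sq]
    simp [conjT_eq_transpose]
  rw [this]; positivity

lemma psd_det_nonneg_s15 {M : Matrix ι ι ℝ} (hM : M.PosSemidef) : 0 ≤ M.det := by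
  obtain ⟨B, hB⟩ := psd_eq_ct_mul_self hM
  rw [hB, Matrix.det_mul, Matrix.det_conjTranspose, star_trivial]
  exact mul_self_nonneg _
/-- det(1 + Y) ≥ 1 for PSD Y -/
lemma one_le_det_one_add {Y : Matrix ι ι ℝ} (hY : Y.PosSemidef) : 1 ≤ (1 + Y).det := by
  classical
  rw [det_one_add_eq_sum_pminor]
  have h0 : pminor Y (∅ : Finset ι) = 1 := by
    rw [pminor]
    exact Matrix.det_isEmpty
  calc (1:ℝ) = pminor Y ∅ := h0.symm
    _ ≤ ∑ T : Finset ι, pminor Y T :=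
        Finset.single_le_sum (fun T _ => pminor_nonneg hY T) (Finset.mem_univ _)

open scoped MatrixOrder in
/-- determinant monotonicity: det S ≤ det (S + X) for PSD S, X -/
lemma det_le_det_add {S X : Matrix ι ι ℝ} (hS : S.PosSemidef) (hX : X.PosSemidef) :
    S.det ≤ (S + X).det := by
  classical
  by_cases hdet : S.det = 0
  · rw [hdet]; exact psd_det_nonneg_s15 (hS.add hX)
  · have hSd : S.PosDef := by
      refine Matrix.posDef_iff_dotProduct_mulVec.mpr ⟨hS.1, fun x hx => ?_⟩
      rcases lt_or_eq_of_le (hS.dotProduct_mulVec_nonneg x) with h | h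
      · exact h
      · exfalso
        have hx0 : S *ᵥ x = 0 := (hS.dotProduct_mulVec_zero_iff x).mp h.symm
        exact hdet ((Matrix.exists_mulVec_eq_zero_iff).mp ⟨x, hx, hx0⟩)
    have hSinv : S⁻¹.PosDef := hSd.inv
    set R := CFC.sqrt X with hR
    have hRpsd : R.PosSemidef := (CFC.sqrt_nonneg X).posSemidef
    have hRR : R * R = X := CFC.sqrt_mul_sqrt_self X hX.nonneg
    have hY : (R * S⁻¹ * R).PosSemidef := by
      have h := hSinv.posSemidef.conjTranspose_mul_mul_same R
      rwa [hRpsd.1.eq] at h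
    have hu : IsUnit S.det := isUnit_iff_ne_zero.mpr hdet
    have key : (S + X).det = S.det * (1 + R * S⁻¹ * R).det := by
      have h1 : S * (1 + S⁻¹ * X) = S + X := by
        rw [Matrix.mul_add, Matrix.mul_one, ← Matrix.mul_assoc,
          Matrix.mul_nonsing_inv _ hu, Matrix.one_mul]
      have h2 : (1 + S⁻¹ * X).det = (1 + R * S⁻¹ * R).det := by
        rw [← hRR, ← Matrix.mul_assoc, Matrix.det_one_add_mul_comm, Matrix.mul_assoc]
      rw [← h1, Matrix.det_mul, h2]
    rw [key]
    nlinarith [one_le_det_one_add hY, hSd.det_pos]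

lemma fischer_blocks {m n : Type*} [Fintype m] [DecidableEq m] [Fintype n] [DecidableEq n]
    {A : Matrix m m ℝ} {B : Matrix m n ℝ} {D : Matrix n n ℝ}
    (h : (Matrix.fromBlocks A B Bᴴ D).PosSemidef) :
    (Matrix.fromBlocks A B Bᴴ D).det ≤ A.det * D.det := by
  classical
  have hA : A.PosSemidef := by
    have := h.submatrix (Sum.inl : m → m ⊕ n)
    exact this
  have hD : D.PosSemidef := by
    have := h.submatrix (Sum.inr : n → m ⊕ n)
    exact this
  by_cases hdA : A.det = 0
  · -- the big matrix is singular
    obtain ⟨x, hx, hAx⟩ := (Matrix.exists_mulVec_eq_zero_iff).mpr hdA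
    have hy : (Matrix.fromBlocks A B Bᴴ D) *ᵥ (Sum.elim x 0) = 0 := by
      apply (h.dotProduct_mulVec_zero_iff _).mp
      have : (Matrix.fromBlocks A B Bᴴ D) *ᵥ (Sum.elim x 0) =
          Sum.elim (A *ᵥ x) (Bᴴ *ᵥ x) := by
        rw [Matrix.fromBlocks_mulVec]
        simp
      rw [this]
      simp [dotProduct, hAx]
    have : (Matrix.fromBlocks A B Bᴴ D).det = 0 := by
      apply (Matrix.exists_mulVec_eq_zero_iff).mp
      exact ⟨Sum.elim x 0, by simpa using fun hc => hx (funext fun i => congrFun hc (Sum.inl i)), hy⟩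
    rw [this, hdA, zero_mul]
  · have hAd : A.PosDef := by
      refine Matrix.posDef_iff_dotProduct_mulVec.mpr ⟨hA.1, fun x hx => ?_⟩
      rcases lt_or_eq_of_le (hA.dotProduct_mulVec_nonneg x) with h' | h'
      · exact h'
      · exact absurd ((Matrix.exists_mulVec_eq_zero_iff).mp
          ⟨x, hx, (hA.dotProduct_mulVec_zero_iff x).mp h'.symm⟩) hdA
    have hu : IsUnit A.det := isUnit_iff_ne_zero.mpr hdA
    have : Invertible A := A.invertibleOfIsUnitDet hu
    have hschur : (D - Bᴴ * A⁻¹ * B).PosSemidef :=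
      (Matrix.PosDef.fromBlocks₁₁ B D hAd).mp h
    have hX : (Bᴴ * A⁻¹ * B).PosSemidef := hAd.inv.posSemidef.conjTranspose_mul_mul_same B
    have hdet : (Matrix.fromBlocks A B Bᴴ D).det = A.det * (D - Bᴴ * A⁻¹ * B).det := by
      rw [Matrix.det_fromBlocks₁₁]
      congr 2
      rw [Matrix.invOf_eq_nonsing_inv]
    have hmono : (D - Bᴴ * A⁻¹ * B).det ≤ D.det := by
      have := det_le_det_add hschur hX
      rwa [sub_add_cancel] at this
    rw [hdet]
    have h0 : 0 ≤ (D - Bᴴ * A⁻¹ * B).det := psd_det_nonneg_s15 hschur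
    nlinarith [hAd.det_pos]

lemma pminor_fischer {M : Matrix ι ι ℝ} (hM : M.PosSemidef) {J K : Finset ι}
    (hJK : Disjoint J K) :
    pminor M (J ∪ K) ≤ pminor M J * pminor M K := by
  classical
  set f : ({x // x ∈ J} ⊕ {x // x ∈ K}) → ι := Sum.elim Subtype.val Subtype.val with hf
  let e : ({x // x ∈ J} ⊕ {x // x ∈ K}) ≃ {x // x ∈ J ∪ K} :=
    { toFun := Sum.elim (fun a => ⟨a.1, Finset.mem_union_left _ a.2⟩)
        (fun b => ⟨b.1, Finset.mem_union_right _ b.2⟩)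
      invFun := fun x => if h : x.1 ∈ J then Sum.inl ⟨x.1, h⟩
        else Sum.inr ⟨x.1, (Finset.mem_union.mp x.2).resolve_left h⟩
      left_inv := by
        rintro (a | b)
        · simp
        · have hb : b.1 ∉ J := Finset.disjoint_right.mp hJK b.2
          simp [hb]
      right_inv := by
        rintro ⟨x, hx⟩
        by_cases h : x ∈ J <;> simp [h] }
  have h1 : pminor M (J ∪ K) = (M.submatrix f f).det := by
    rw [pminor, ← Matrix.det_submatrix_equiv_self e, Matrix.submatrix_submatrix]
    congr 1
    ext i j
    rcases i with a | b <;> rcases j with c | d <;> rfl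
  have h2 : M.submatrix f f =
      Matrix.fromBlocks
        (M.submatrix (Subtype.val : {x // x ∈ J} → ι) Subtype.val)
        (M.submatrix (Subtype.val : {x // x ∈ J} → ι) (Subtype.val : {x // x ∈ K} → ι))
        (M.submatrix (Subtype.val : {x // x ∈ J} → ι) (Subtype.val : {x // x ∈ K} → ι))ᴴ
        (M.submatrix (Subtype.val : {x // x ∈ K} → ι) Subtype.val) := by
    ext i j
    cases i with
    | inl a =>
      cases j with
      | inl b => rfl
      | inr b => rfl
    | inr a =>
      cases j with
      | inl b =>
        simp only [Matrix.fromBlocks, Matrix.of_apply, Sum.elim_inl, Sum.elim_inr,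
          Matrix.conjTranspose_apply, Matrix.submatrix_apply, hf, star_trivial]
        exact (congrFun (congrFun hM.1.eq _) _).symm.trans (by simp [Matrix.conjTranspose_apply])
      | inr b => rfl
  have hpsd : (M.submatrix f f).PosSemidef := hM.submatrix f
  rw [h1, h2] at *
  exact le_trans (fischer_blocks hpsd) (le_of_eq rfl)

section CB
variable {p N : ℕ}

/-- the permutation associated to an injective `c` with image `S` -/
noncomputable def permOf {S : Finset (Fin N)} (hS : S.card = p) (c : Fin p → Fin N)
    (hc : Function.Injective c) (himg : Finset.image c Finset.univ = S) : Equiv.Perm (Fin p) :=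
  (Equiv.ofBijective
    (fun r => (⟨c r, by rw [← himg]; exact Finset.mem_image_of_mem c (Finset.mem_univ r)⟩ :
        {x // x ∈ S}))
    (by
      refine (Fintype.bijective_iff_injective_and_card _).mpr ⟨fun a b hab => ?_, ?_⟩
      · exact hc (congrArg Subtype.val hab)
      · simp [Fintype.card_coe, hS])).trans (S.orderIsoOfFin hS).toEquiv.symm

lemma permOf_spec {S : Finset (Fin N)} (hS : S.card = p) (c : Fin p → Fin N)
    (hc : Function.Injective c) (himg : Finset.image c Finset.univ = S) (r : Fin p) :
    ((S.orderIsoOfFin hS (permOf hS c hc himg r) : Fin N)) = c r := by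
  simp [permOf]

end CB

section CB2
variable {p N : ℕ}

lemma cauchy_binet (Z : Matrix (Fin p) (Fin N) ℝ) (x : Fin N → ℝ) :
    (Z * Matrix.diagonal x * Zᵀ).det
      = ∑ S : Finset (Fin N), (∏ i ∈ S, x i) * detSq Z S := by
  classical
  -- Step 1: expand det multilinearly over the rows
  have hM : (Z * Matrix.diagonal x * Zᵀ) =
      Matrix.of (fun r => ∑ i : Fin N, (Z r i * x i) • (fun j => Z j i)) := by
    ext r j
    rw [Matrix.mul_apply]
    simp [Matrix.mul_diagonal, Matrix.transpose_apply, Finset.sum_apply, mul_assoc]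
  set F : (Fin p → Fin N) → ℝ :=
    fun c => (∏ r : Fin p, (Z r (c r) * x (c r))) *
      (Matrix.of (fun r j => Z j (c r))).det with hF
  have step1 : (Z * Matrix.diagonal x * Zᵀ).det = ∑ c : Fin p → Fin N, F c := by
    rw [hM]
    have : (Matrix.of (fun r => ∑ i : Fin N, (Z r i * x i) • (fun j => Z j i))).det
        = (Matrix.detRowAlternating (R := ℝ) (n := Fin p)).toMultilinearMap
            (fun r => ∑ i : Fin N, (Z r i * x i) • (fun j => Z j i)) := rfl
    rw [this, MultilinearMap.map_sum]
    refine Finset.sum_congr rfl fun c _ => ?_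
    rw [MultilinearMap.map_smul_univ, smul_eq_mul]
    rfl
  -- Step 2: only injective functions contribute
  have step2 : ∑ c : Fin p → Fin N, F c
      = ∑ c ∈ Finset.univ.filter (fun c : Fin p → Fin N => Function.Injective c), F c := by
    symm
    apply Finset.sum_filter_of_ne
    intro c _ hne
    by_contra hinj
    apply hne
    rw [Function.not_injective_iff] at hinj
    obtain ⟨a, b, hab, hne'⟩ := hinj
    have : (Matrix.of (fun r j => Z j (c r))).det = 0 :=
      Matrix.det_zero_of_row_eq hne' (by ext j; simp [hab])
    simp [hF, this]
  -- Step 3: group by image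
  have step3 : ∑ c ∈ Finset.univ.filter (fun c : Fin p → Fin N => Function.Injective c), F c
      = ∑ S ∈ Finset.univ.filter (fun S : Finset (Fin N) => S.card = p),
          ∑ c ∈ (Finset.univ.filter (fun c : Fin p → Fin N => Function.Injective c)).filter
            (fun c => Finset.image c Finset.univ = S), F c := by
    rw [Finset.sum_fiberwise_of_maps_to]
    intro c hc
    simp only [Finset.mem_filter, Finset.mem_univ, true_and] at hc ⊢
    rw [Finset.card_image_of_injective _ hc]
    simp
  -- Step 4: per-S evaluation
  have step4 : ∀ S : Finset (Fin N), ∀ hS : S.card = p,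
      ∑ c ∈ (Finset.univ.filter (fun c : Fin p → Fin N => Function.Injective c)).filter
        (fun c => Finset.image c Finset.univ = S), F c
      = (∏ i ∈ S, x i) * detSq Z S := by
    intro S hS
    set v : Fin p → Fin N := fun r => ((S.orderIsoOfFin hS r : Fin N)) with hv
    have hvinj : Function.Injective v := fun a b hab =>
      (S.orderIsoOfFin hS).injective (Subtype.val_injective hab)
    have himgv : ∀ σ : Equiv.Perm (Fin p),
        Finset.image (fun r => v (σ r)) Finset.univ = S := by
      intro σ
      apply Finset.eq_of_subset_of_card_le
      · intro y hy
        simp only [Finset.mem_image] at hy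
        obtain ⟨r, _, rfl⟩ := hy
        exact ((S.orderIsoOfFin hS) (σ r)).2
      · have hinj : Function.Injective fun r => v (σ r) := fun a b hab => σ.injective (hvinj hab)
        rw [Finset.card_image_of_injective _ hinj, hS]
        simp
    have hsum : ∑ c ∈ (Finset.univ.filter (fun c : Fin p → Fin N => Function.Injective c)).filter
        (fun c => Finset.image c Finset.univ = S), F c
        = ∑ σ : Equiv.Perm (Fin p), F (fun r => v (σ r)) := by
      refine Finset.sum_bij'
        (fun c hc => permOf hS c (Finset.mem_filter.mp (Finset.mem_filter.mp hc).1).2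
          (Finset.mem_filter.mp hc).2)
        (fun σ _ => fun r => v (σ r)) (fun c hc => Finset.mem_univ _) ?_ ?_ ?_ ?_
      · intro σ _
        simp only [Finset.mem_filter, Finset.mem_univ, true_and]
        exact ⟨hvinj.comp σ.injective, himgv σ⟩
      · intro c hc
        funext r
        exact permOf_spec hS c _ _ r
      · intro σ _
        exact Equiv.ext fun r => hvinj (permOf_spec hS _ _ _ r)
      · intro c hc
        congr 1
        funext r
        exact (permOf_spec hS c _ _ r).symm
    rw [hsum]
    -- evaluate the sum over permutations
    set D : Matrix (Fin p) (Fin p) ℝ := Matrix.of (fun r j => Z r (v j)) with hD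
    have hterm : ∀ σ : Equiv.Perm (Fin p), F (fun r => v (σ r))
        = (∏ i ∈ S, x i) * (((Equiv.Perm.sign σ : ℤ) : ℝ) * Dᵀ.det * ∏ r, Z r (v (σ r))) := by
      intro σ
      have hx2 : ∏ r : Fin p, x (v r) = ∏ i ∈ S, x i := by
        rw [← Finset.prod_coe_sort S x]
        exact Equiv.prod_comp (S.orderIsoOfFin hS).toEquiv (fun i : {a // a ∈ S} => x i.1)
      have hx : ∏ r : Fin p, x (v (σ r)) = ∏ i ∈ S, x i :=
        (Equiv.prod_comp σ (fun r => x (v r))).trans hx2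
      have hdet : (Matrix.of (fun r j => Z j (v (σ r)))).det
          = ((Equiv.Perm.sign σ : ℤ) : ℝ) * Dᵀ.det := by
        have : (Matrix.of (fun r j => Z j (v (σ r)))) = Dᵀ.submatrix σ id := by
          ext r j; rfl
        rw [this, Matrix.det_permute]
      rw [hF]
      simp only
      rw [Finset.prod_mul_distrib, hx, hdet]
      ring
    rw [Finset.sum_congr rfl (fun σ _ => hterm σ), ← Finset.mul_sum]
    congr 1
    have hsum2 : ∑ σ : Equiv.Perm (Fin p),
        ((Equiv.Perm.sign σ : ℤ) : ℝ) * Dᵀ.det * ∏ r, Z r (v (σ r))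
        = Dᵀ.det * ∑ σ : Equiv.Perm (Fin p),
            ((Equiv.Perm.sign σ : ℤ) : ℝ) * ∏ r, Dᵀ (σ r) r := by
      rw [Finset.mul_sum]
      refine Finset.sum_congr rfl fun σ _ => ?_
      have : ∏ r, Z r (v (σ r)) = ∏ r, Dᵀ (σ r) r := by
        refine Finset.prod_congr rfl fun r _ => rfl
      rw [this]; ring
    rw [hsum2, ← Matrix.det_apply', Matrix.det_transpose]
    rw [detSq, dif_pos hS, sq]
  rw [step1, step2, step3]
  rw [Finset.sum_congr rfl (fun S hS => step4 S (Finset.mem_filter.mp hS).2)]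
  apply Finset.sum_filter_of_ne
  intro S _ hne
  by_contra hcard
  apply hne
  rw [detSq, dif_neg hcard, mul_zero]

end CB2


section Glue
variable {ι : Type*} [Fintype ι] [DecidableEq ι]

lemma pminor_neg (M : Matrix ι ι ℝ) (T : Finset ι) :
    pminor (-M) T = (-1 : ℝ)^T.card * pminor M T := by
  rw [pminor, pminor]
  have h : (-M).submatrix (Subtype.val : {x // x ∈ T} → ι) (Subtype.val : {x // x ∈ T} → ι)
      = -(M.submatrix (Subtype.val : {x // x ∈ T} → ι) (Subtype.val : {x // x ∈ T} → ι)) := rfl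
  rw [h, Matrix.det_neg, Fintype.card_coe]

lemma pminor_map (M : Matrix ι ι ℝ) (W : Finset ι) (T : Finset {x // x ∈ W}) :
    pminor (M.submatrix (Subtype.val : {x // x ∈ W} → ι) Subtype.val) T
      = pminor M (T.map (Function.Embedding.subtype (· ∈ W))) := by
  classical
  let e : {a // a ∈ T} ≃ {y // y ∈ T.map (Function.Embedding.subtype (· ∈ W))} :=
    { toFun := fun a => ⟨a.1.1, Finset.mem_map_of_mem _ a.2⟩
      invFun := fun y => by
        refine ⟨⟨y.1, ?_⟩, ?_⟩
        · obtain ⟨a, ha, hay⟩ := Finset.mem_map.mp y.2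
          exact hay ▸ a.2
        · obtain ⟨a, ha, hay⟩ := Finset.mem_map.mp y.2
          obtain ⟨a1, ha1⟩ := a
          simp only [Function.Embedding.coe_subtype] at hay
          subst hay
          exact ha
      left_inv := fun a => by ext; rfl
      right_inv := fun y => by ext; rfl }
  rw [pminor, pminor, ← Matrix.det_submatrix_equiv_self e
    (M.submatrix (Subtype.val : {y // y ∈ T.map (Function.Embedding.subtype (· ∈ W))} → ι)
      Subtype.val)]
  congr 1

lemma sum_finset_subtype (W : Finset ι) (f : Finset ι → ℝ) :
    ∑ T : Finset {x // x ∈ W}, f (T.map (Function.Embedding.subtype (· ∈ W)))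
      = ∑ T ∈ W.powerset, f T := by
  classical
  refine Finset.sum_bij' (fun T _ => T.map (Function.Embedding.subtype (· ∈ W)))
    (fun T' _ => T'.subtype (· ∈ W)) ?_ ?_ ?_ ?_ ?_
  · intro T _
    rw [Finset.mem_powerset]
    intro y hy
    obtain ⟨a, _, hay⟩ := Finset.mem_map.mp hy
    exact hay ▸ a.2
  · intro T' _
    exact Finset.mem_univ _
  · intro T _
    ext a
    rw [Finset.mem_subtype, Finset.mem_map]
    exact ⟨fun ⟨b, hb, hba⟩ => (Subtype.ext hba : b = a) ▸ hb, fun h => ⟨a, h, rfl⟩⟩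
  · intro T' hT'
    exact Finset.subtype_map_of_mem (fun x hx => Finset.mem_powerset.mp hT' hx)
  · intro T _
    rfl

lemma sum_powerset_neg_one_pow_card_real (A : Finset ι) :
    ∑ W ∈ A.powerset, (-1 : ℝ)^W.card = if A = ∅ then 1 else 0 := by
  by_cases hA : A = ∅
  · subst hA; simp
  · rw [if_neg hA]
    have h := Finset.sum_powerset_neg_one_pow_card (x := A)
    rw [if_neg hA] at h
    exact_mod_cast congrArg (Int.cast : ℤ → ℝ) h

end Glue

section Main
variable {p N : ℕ}

lemma mulDiag_entry (Z : Matrix (Fin p) (Fin N) ℝ) (d : Fin N → ℝ) (r s : Fin p) :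
    (Z * Matrix.diagonal d * Zᵀ) r s = ∑ k, Z r k * d k * Z s k := by
  rw [Matrix.mul_apply]
  refine Finset.sum_congr rfl fun k _ => ?_
  rw [Matrix.mul_diagonal, Matrix.transpose_apply]

lemma avoid_eq (Z : Matrix (Fin p) (Fin N) ℝ) (hZ : Z * Zᵀ = 1) (W : Finset (Fin N)) :
    ∑ S : Finset (Fin N), (if S ∩ W = ∅ then detSq Z S else 0)
      = ∑ T ∈ W.powerset, (-1 : ℝ)^T.card * pminor (Zᵀ * Z) T := by
  classical
  set x : Fin N → ℝ := fun i => if i ∈ W then 0 else 1 with hxdef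
  have hx : ∀ S : Finset (Fin N), (∏ i ∈ S, x i) = if S ∩ W = ∅ then (1:ℝ) else 0 := by
    intro S
    by_cases h : S ∩ W = ∅
    · rw [if_pos h]
      apply Finset.prod_eq_one
      intro i hi
      rw [hxdef]
      simp only
      rw [if_neg]
      intro hiW
      exact Finset.eq_empty_iff_forall_notMem.mp h i (Finset.mem_inter.mpr ⟨hi, hiW⟩)
    · rw [if_neg h]
      obtain ⟨i, hi⟩ := Finset.nonempty_iff_ne_empty.mpr h
      obtain ⟨hiS, hiW⟩ := Finset.mem_inter.mp hi
      refine Finset.prod_eq_zero hiS ?_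
      rw [hxdef]
      simp [hiW]
  have h1 : ∑ S : Finset (Fin N), (if S ∩ W = ∅ then detSq Z S else 0)
      = (Z * Matrix.diagonal x * Zᵀ).det := by
    rw [cauchy_binet]
    refine Finset.sum_congr rfl fun S _ => ?_
    rw [hx S, ite_mul, one_mul, zero_mul]
  set C : Matrix (Fin p) {i // i ∈ W} ℝ := Z.submatrix id Subtype.val with hC
  have h2 : Z * Matrix.diagonal x * Zᵀ = 1 - C * Cᵀ := by
    have hZd : Z * Matrix.diagonal (fun i => if i ∈ W then (1:ℝ) else 0) * Zᵀ = C * Cᵀ := by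
      ext r s
      rw [mulDiag_entry, Matrix.mul_apply]
      simp only [hC, Matrix.submatrix_apply, id_eq, Matrix.transpose_apply]
      have hstep : ∀ k, Z r k * (if k ∈ W then (1:ℝ) else 0) * Z s k
          = if k ∈ W then Z r k * Z s k else 0 := fun k => by split_ifs <;> ring
      rw [Finset.sum_congr rfl fun k _ => hstep k, Finset.sum_ite_mem, Finset.univ_inter,
        ← Finset.sum_coe_sort]
    have hxsplit : Matrix.diagonal x = 1 - Matrix.diagonal (fun i => if i ∈ W then (1:ℝ) else 0) := by
      ext i j
      rw [Matrix.sub_apply, ← Matrix.diagonal_one]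
      by_cases hij : i = j
      · subst hij
        rw [Matrix.diagonal_apply_eq, Matrix.diagonal_apply_eq, Matrix.diagonal_apply_eq, hxdef]
        by_cases h : i ∈ W <;> simp [h]
      · rw [Matrix.diagonal_apply_ne _ hij, Matrix.diagonal_apply_ne _ hij,
          Matrix.diagonal_apply_ne _ hij, sub_zero]
    rw [hxsplit, Matrix.mul_sub, Matrix.mul_one, Matrix.sub_mul, hZ, hZd]
  have h3 : (1 - C * Cᵀ).det = (1 - Cᵀ * C).det := Matrix.det_one_sub_mul_comm C Cᵀ
  have h4 : Cᵀ * C = (Zᵀ * Z).submatrix (Subtype.val : {i // i ∈ W} → Fin N) Subtype.val := by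
    ext a b
    simp [hC, Matrix.mul_apply]
  have h5 : (1 - Cᵀ * C).det = ∑ T : Finset {i // i ∈ W},
      pminor (-((Zᵀ * Z).submatrix (Subtype.val : {i // i ∈ W} → Fin N) Subtype.val)) T := by
    rw [sub_eq_add_neg, det_one_add_eq_sum_pminor, h4]
  rw [h1, h2, h3, h5]
  have h6 : ∀ T : Finset {i // i ∈ W},
      pminor (-((Zᵀ * Z).submatrix (Subtype.val : {i // i ∈ W} → Fin N) Subtype.val)) T
      = (-1:ℝ)^(T.map (Function.Embedding.subtype (· ∈ W))).card
          * pminor (Zᵀ * Z) (T.map (Function.Embedding.subtype (· ∈ W))) := by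
    intro T
    rw [Finset.card_map]
    have hneg : -((Zᵀ * Z).submatrix (Subtype.val : {i // i ∈ W} → Fin N)
          (Subtype.val : {i // i ∈ W} → Fin N))
        = (-(Zᵀ * Z)).submatrix (Subtype.val : {i // i ∈ W} → Fin N)
          (Subtype.val : {i // i ∈ W} → Fin N) := rfl
    rw [hneg, pminor_map, pminor_neg, Finset.card_map]
  rw [Finset.sum_congr rfl fun T _ => h6 T]
  exact sum_finset_subtype W (fun T => (-1:ℝ)^T.card * pminor (Zᵀ * Z) T)

end Main

section Main2
variable {p N : ℕ}

lemma inner_alt_sum (J T : Finset (Fin N)) (hTJ : T ⊆ J) :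
    ∑ W ∈ J.powerset.filter (fun W => T ⊆ W), (-1 : ℝ)^W.card
      = (-1 : ℝ)^T.card * (if J = T then 1 else 0) := by
  classical
  have hbij : ∑ W ∈ J.powerset.filter (fun W => T ⊆ W), (-1 : ℝ)^W.card
      = ∑ U ∈ (J \ T).powerset, (-1 : ℝ)^(T ∪ U).card := by
    refine Finset.sum_bij' (fun W _ => W \ T) (fun U _ => T ∪ U) ?_ ?_ ?_ ?_ ?_
    · intro W hW
      rw [Finset.mem_powerset]
      obtain ⟨hWJ, hTW⟩ := Finset.mem_filter.mp hW
      exact Finset.sdiff_subset_sdiff (Finset.mem_powerset.mp hWJ) (le_refl T)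
    · intro U hU
      rw [Finset.mem_filter, Finset.mem_powerset]
      refine ⟨Finset.union_subset hTJ ?_, Finset.subset_union_left⟩
      exact (Finset.mem_powerset.mp hU).trans (Finset.sdiff_subset)
    · intro W hW
      exact Finset.union_sdiff_of_subset (Finset.mem_filter.mp hW).2
    · intro U hU
      apply Finset.union_sdiff_cancel_left
      exact Finset.disjoint_of_subset_right (Finset.mem_powerset.mp hU)
        Finset.disjoint_sdiff
    · intro W hW
      rw [Finset.union_sdiff_of_subset (Finset.mem_filter.mp hW).2]
  rw [hbij]
  have hcard : ∀ U ∈ (J \ T).powerset, (T ∪ U).card = T.card + U.card := by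
    intro U hU
    have hdisj : Disjoint T U := Finset.disjoint_of_subset_right
      (Finset.mem_powerset.mp hU) Finset.disjoint_sdiff
    exact Finset.card_union_of_disjoint hdisj
  rw [Finset.sum_congr rfl fun U hU => by rw [hcard U hU, pow_add]]
  rw [← Finset.mul_sum, sum_powerset_neg_one_pow_card_real]
  congr 1
  have : J \ T = ∅ ↔ J = T := by
    rw [Finset.sdiff_eq_empty_iff_subset]
    exact ⟨fun h => le_antisymm h hTJ, fun h => h ▸ le_refl J⟩
  by_cases h : J = T
  · rw [if_pos ((this.mpr h)), if_pos h]
  · rw [if_neg (fun hc => h (this.mp hc)), if_neg h]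

lemma prDP_subset_eq (Z : Matrix (Fin p) (Fin N) ℝ) (hZ : Z * Zᵀ = 1) (J : Finset (Fin N)) :
    prDP Z {S | J ⊆ S} = pminor (Zᵀ * Z) J := by
  classical
  have hpr : prDP Z {S | J ⊆ S} = ∑ S : Finset (Fin N), if J ⊆ S then detSq Z S else 0 := by
    rw [prDP]
    refine Finset.sum_congr rfl fun S _ => ?_
    by_cases h : J ⊆ S
    · rw [if_pos h, if_pos (show S ∈ {S | J ⊆ S} from h)]
    · rw [if_neg h, if_neg (show S ∉ {S | J ⊆ S} from h)]
  have key : ∀ S : Finset (Fin N), (if J ⊆ S then detSq Z S else 0)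
      = ∑ W ∈ J.powerset, (-1 : ℝ)^W.card * (if S ∩ W = ∅ then detSq Z S else 0) := by
    intro S
    have hps : J.powerset.filter (fun W => S ∩ W = ∅) = (J \ S).powerset := by
      ext W
      rw [Finset.mem_filter, Finset.mem_powerset, Finset.mem_powerset, Finset.subset_sdiff]
      constructor
      · rintro ⟨h1, h2⟩
        exact ⟨h1, Finset.disjoint_left.mpr fun a haW haS =>
          (Finset.eq_empty_iff_forall_notMem.mp h2 a (Finset.mem_inter.mpr ⟨haS, haW⟩))⟩
      · rintro ⟨h1, h2⟩
        refine ⟨h1, Finset.eq_empty_iff_forall_notMem.mpr fun a ha => ?_⟩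
        obtain ⟨haS, haW⟩ := Finset.mem_inter.mp ha
        exact Finset.disjoint_left.mp h2 haW haS
    have h1 : ∑ W ∈ J.powerset, (-1 : ℝ)^W.card * (if S ∩ W = ∅ then detSq Z S else 0)
        = ∑ W ∈ J.powerset.filter (fun W => S ∩ W = ∅), (-1 : ℝ)^W.card * detSq Z S := by
      rw [Finset.sum_filter]
      refine Finset.sum_congr rfl fun W _ => ?_
      split_ifs <;> simp
    rw [h1, hps, ← Finset.sum_mul, sum_powerset_neg_one_pow_card_real]
    by_cases h : J ⊆ S
    · rw [if_pos h, if_pos (Finset.sdiff_eq_empty_iff_subset.mpr h), one_mul]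
    · rw [if_neg h, if_neg (fun hc => h (Finset.sdiff_eq_empty_iff_subset.mp hc)), zero_mul]
  rw [hpr, Finset.sum_congr rfl fun S _ => key S, Finset.sum_comm]
  have havoid : ∀ W : Finset (Fin N),
      ∑ S : Finset (Fin N), (-1 : ℝ)^W.card * (if S ∩ W = ∅ then detSq Z S else 0)
      = (-1 : ℝ)^W.card * ∑ T ∈ W.powerset, (-1 : ℝ)^T.card * pminor (Zᵀ * Z) T := by
    intro W
    rw [← Finset.mul_sum, avoid_eq Z hZ W]
  rw [Finset.sum_congr rfl fun W _ => havoid W]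
  have hexpand : ∑ W ∈ J.powerset, (-1 : ℝ)^W.card *
      ∑ T ∈ W.powerset, (-1 : ℝ)^T.card * pminor (Zᵀ * Z) T
      = ∑ W ∈ J.powerset, ∑ T ∈ W.powerset,
          (-1 : ℝ)^W.card * ((-1 : ℝ)^T.card * pminor (Zᵀ * Z) T) := by
    exact Finset.sum_congr rfl fun W _ => Finset.mul_sum _ _ _
  rw [hexpand]
  rw [Finset.sum_comm' (t' := J.powerset)
    (s' := fun T => J.powerset.filter (fun W => T ⊆ W))
    (fun W T => by
      constructor
      · rintro ⟨h1, h2⟩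
        rw [Finset.mem_powerset] at h1 h2 ⊢
        exact ⟨Finset.mem_filter.mpr ⟨Finset.mem_powerset.mpr h1, h2⟩, h2.trans h1⟩
      · rintro ⟨h1, h2⟩
        obtain ⟨h3, h4⟩ := Finset.mem_filter.mp h1
        exact ⟨h3, Finset.mem_powerset.mpr h4⟩)]
  have hfinal : ∀ T ∈ J.powerset,
      ∑ W ∈ J.powerset.filter (fun W => T ⊆ W),
        (-1 : ℝ)^W.card * ((-1 : ℝ)^T.card * pminor (Zᵀ * Z) T)
      = (if J = T then 1 else 0) * pminor (Zᵀ * Z) T := by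
    intro T hT
    rw [← Finset.sum_mul, inner_alt_sum J T (Finset.mem_powerset.mp hT)]
    have hsq : ((-1:ℝ)^T.card) * ((-1:ℝ)^T.card) = 1 := by
      rw [← pow_add, ← two_mul, pow_mul, neg_one_sq, one_pow]
    rw [mul_mul_mul_comm, hsq, one_mul]
  rw [Finset.sum_congr rfl hfinal]
  have hlast : ∀ T ∈ J.powerset, (if J = T then (1:ℝ) else 0) * pminor (Zᵀ * Z) T
      = if J = T then pminor (Zᵀ * Z) T else 0 := fun T _ => by split_ifs <;> simp
  rw [Finset.sum_congr rfl hlast,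
    Finset.sum_ite_eq J.powerset J (fun T => pminor (Zᵀ * Z) T),
    if_pos (Finset.mem_powerset.mpr (le_refl J))]

end Main2

/-- negative association, inequality (3) of Proposition 1: for disjoint
nonempty J, K, P(J ∪ K ⊆ φ) ≤ P(J ⊆ φ) · P(K ⊆ φ). -/
theorem negative_association {N p : ℕ} (hp : 1 < p) (hpN : p < N)
    (Z : Matrix (Fin p) (Fin N) ℝ) (hZ : Z * Zᵀ = 1)
    (J K : Finset (Fin N)) (hJ : J.Nonempty) (hK : K.Nonempty) (hJK : Disjoint J K) :
    prDP Z {S | J ∪ K ⊆ S} ≤ prDP Z {S | J ⊆ S} * prDP Z {S | K ⊆ S} := by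
  classical
  have hG : (Zᵀ * Z).PosSemidef := by
    have h := Matrix.posSemidef_conjTranspose_mul_self Z
    rwa [conjT_eq_transpose] at h
  rw [prDP_subset_eq Z hZ (J ∪ K), prDP_subset_eq Z hZ J, prDP_subset_eq Z hZ K]
  exact pminor_fischer hG hJK
end
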